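/- arXiv:0802.1703 — 8 statements merged into one kernel-verified Lean document; each statement's English description precedes it below -/
import Mathlib

section
/- Let F be a field of characteristic 3 and let λ > 0 be a real number. Then the equation x³ − T^λ x − 1 = 0 has no solution x ∈ Λ_0^F. Consequently, for any field F of characteristic 3 the universal Novikov field Λ^F is not algebraically closed. -/
noncomputable section

open scoped Classical Pointwise

/-- Auxiliary: the sum of two subsets of `ℝ` each of which meets every interval `(-∞, C]`
in a finite set again has this property. -/
theorem add_inter_Iic_finite {A B : Set ℝ}
    (hA : ∀ C : ℝ, (A ∩ Set.Iic C).Finite) (hB : ∀ C : ℝ, (B ∩ Set.Iic C).Finite) :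
    ∀ C : ℝ, ((A + B) ∩ Set.Iic C).Finite := by
  intro C
  rcases Set.eq_empty_or_nonempty A with hAe | ⟨a₀, ha₀⟩
  · simp [hAe]
  rcases Set.eq_empty_or_nonempty B with hBe | ⟨b₀, hb₀⟩
  · simp [hBe]
  obtain ⟨a₁, ha₁A, ha₁⟩ : ∃ a₁ ∈ A, ∀ a ∈ A, a₁ ≤ a := by
    obtain ⟨a₁, h₁, h₂⟩ := Set.exists_min_image _ id (hA a₀) ⟨a₀, ha₀, Set.self_mem_Iic⟩
    refine ⟨a₁, h₁.1, fun a ha => ?_⟩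
    by_cases hle : a ≤ a₀
    · exact h₂ a ⟨ha, hle⟩
    · exact le_trans (h₂ a₀ ⟨ha₀, Set.self_mem_Iic⟩) (le_of_not_ge hle)
  obtain ⟨b₁, hb₁B, hb₁⟩ : ∃ b₁ ∈ B, ∀ b ∈ B, b₁ ≤ b := by
    obtain ⟨b₁, h₁, h₂⟩ := Set.exists_min_image _ id (hB b₀) ⟨b₀, hb₀, Set.self_mem_Iic⟩
    refine ⟨b₁, h₁.1, fun b hb => ?_⟩
    by_cases hle : b ≤ b₀
    · exact h₂ b ⟨hb, hle⟩
    · exact le_trans (h₂ b₀ ⟨hb₀, Set.self_mem_Iic⟩) (le_of_not_ge hle)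
  have hsub : (A + B) ∩ Set.Iic C ⊆
      (fun p : ℝ × ℝ => p.1 + p.2) '' ((A ∩ Set.Iic (C - b₁)) ×ˢ (B ∩ Set.Iic (C - a₁))) := by
    rintro r ⟨hr, hrC⟩
    rw [Set.mem_add] at hr
    obtain ⟨a, ha, b, hb, rfl⟩ := hr
    have hC : a + b ≤ C := hrC
    exact ⟨(a, b), ⟨⟨ha, by have := hb₁ b hb; simp only [Set.mem_Iic]; linarith⟩,
      ⟨hb, by have := ha₁ a ha; simp only [Set.mem_Iic]; linarith⟩⟩, rfl⟩
  exact Set.Finite.subset (Set.Finite.image _ (Set.Finite.prod (hA _) (hB _))) hsub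

variable (F : Type*) [Field F]

/-- The universal Novikov field `Λ^F`: the subring of Hahn series over `ℝ` with coefficients
in `F` whose support meets every interval `(-∞, C]` in a finite set.  (Formal sums
`Σ aᵢ T^{λᵢ}` with `λᵢ → ∞`.) -/
def Novikov : Subring (HahnSeries ℝ F) where
  carrier := {s | ∀ C : ℝ, (s.support ∩ Set.Iic C).Finite}
  zero_mem' := by intro C; simp [HahnSeries.support_zero]
  one_mem' := by
    intro C
    refine Set.Finite.subset (Set.finite_singleton (0 : ℝ)) ?_
    intro r hr
    have h1 : (1 : HahnSeries ℝ F).coeff r ≠ 0 := hr.1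
    rw [HahnSeries.coeff_one] at h1
    by_contra hne
    simp only [Set.mem_singleton_iff] at hne
    simp [hne] at h1
  add_mem' := by
    intro a b ha hb C
    refine Set.Finite.subset ((ha C).union (hb C)) ?_
    intro r hr
    rcases HahnSeries.support_add_subset _ _ hr.1 with h | h
    · exact Or.inl ⟨h, hr.2⟩
    · exact Or.inr ⟨h, hr.2⟩
  neg_mem' := by
    intro a ha C
    refine Set.Finite.subset (ha C) ?_
    intro r hr
    rw [HahnSeries.support_neg] at hr
    exact hr
  mul_mem' := by
    intro a b ha hb C
    refine Set.Finite.subset (add_inter_Iic_finite ha hb C) ?_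
    intro r hr
    exact ⟨HahnSeries.support_mul_subset hr.1, hr.2⟩

/-- The element `T^c` of the universal Novikov field. -/
def NovikovT (c : ℝ) : Novikov F :=
  ⟨HahnSeries.single c 1, by
    intro C
    refine Set.Finite.subset (Set.finite_singleton c) ?_
    intro r hr
    exact HahnSeries.support_single_subset hr.1⟩

/-- The constant element `c·T^0` of the universal Novikov field. -/
def NovikovC (c : F) : Novikov F :=
  ⟨HahnSeries.single (0 : ℝ) c, by
    intro C
    refine Set.Finite.subset (Set.finite_singleton (0 : ℝ)) ?_
    intro r hr
    exact HahnSeries.support_single_subset hr.1⟩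

variable {F}

/-- Membership in `Λ₀^F ⊆ Λ^F`: all exponents are `≥ 0`. -/
def MemLambda0 (x : Novikov F) : Prop :=
  ∀ r : ℝ, r < 0 → (x : HahnSeries ℝ F).coeff r = 0

/-- Membership in `Λ₊^F ⊆ Λ₀^F`: all exponents are `> 0`. -/
def MemLambdaPlus (x : Novikov F) : Prop :=
  ∀ r : ℝ, r ≤ 0 → (x : HahnSeries ℝ F).coeff r = 0

/-! In characteristic 3 the Frobenius turns the equation `u³ = 1 + T^μ u` into
`(u - 1)³ = T^μ u`. Comparing orders shows that a root has order 0, so `v = T^{-μ/3} (u - 1)`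
is a root of the same equation with `μ/3` in place of `μ`, and `u = 1 + T^{μ/3} v`.
Iterating from `μ = λ`, a root `x` has a nonzero coefficient at every exponent
`λ/2 (1 - 3⁻ⁿ)`: infinitely many exponents below `λ`, which no element of `Λ^F` has. -/

namespace HahnSeries

variable {Γ R : Type*}

instance charP [PartialOrder Γ] [AddCommMonoid Γ] [IsOrderedCancelAddMonoid Γ] [Semiring R]
    (p : ℕ) [CharP R p] : CharP (HahnSeries Γ R) p :=
  charP_of_injective_ringHom C_injective p

variable [Field Γ] [LinearOrder Γ] [IsStrictOrderedRing Γ]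

theorem order_eq_zero_of_pow_three_eq [Ring R] [NoZeroDivisors R] [Nontrivial R] {μ : Γ}
    (hμ : 0 < μ) {u : HahnSeries Γ R} (hu : u ^ 3 = 1 + single μ 1 * u) : u.order = 0 := by
  have hu0 : u ≠ 0 := by rintro rfl; simp at hu
  have hcoeff : ∀ t, (u ^ 3).coeff t = (1 : HahnSeries Γ R).coeff t + u.coeff (t - μ) := by
    intro t
    rw [hu, coeff_add, coeff_single_mul, one_mul]
  rcases lt_trichotomy u.order 0 with hneg | hzero | hpos
  · have hlead : (u ^ 3).coeff (3 * u.order) ≠ 0 := by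
      simpa [order_pow] using coeff_order_eq_zero.not.mpr (pow_ne_zero 3 hu0)
    refine absurd ?_ hlead
    rw [hcoeff, coeff_one, if_neg (by linarith), coeff_eq_zero_of_lt_order (by linarith), add_zero]
  · exact hzero
  · have h := hcoeff 0
    rw [coeff_eq_zero_of_lt_order (by simp [order_pow]; linarith), coeff_one, if_pos rfl,
      coeff_eq_zero_of_lt_order (by linarith), add_zero] at h
    exact absurd h zero_ne_one

theorem exists_pow_three_eq_of_pow_three_eq [CommRing R] [CharP R 3] {μ : Γ}
    {u : HahnSeries Γ R} (hu : u ^ 3 = 1 + single μ 1 * u) :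
    ∃ v : HahnSeries Γ R, v ^ 3 = 1 + single (μ / 3) 1 * v ∧ u = 1 + single (μ / 3) 1 * v := by
  have : Fact (Nat.Prime 3) := ⟨Nat.prime_three⟩
  have hT : ∀ a b : Γ, single a (1 : R) * single b 1 = single (a + b) 1 := fun a b => by
    rw [single_mul_single, mul_one]
  have hu' : 1 + single (μ / 3) 1 * (single (-(μ / 3)) 1 * (u - 1)) = u := by
    rw [← mul_assoc, hT, add_neg_cancel, single_zero_one, one_mul, add_sub_cancel]
  refine ⟨single (-(μ / 3)) 1 * (u - 1), ?_, hu'.symm⟩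
  rw [hu', mul_pow, single_pow, one_pow, sub_pow_char, one_pow, hu, add_sub_cancel_left,
    ← mul_assoc, hT, nsmul_eq_mul, show ((3 : ℕ) : Γ) * -(μ / 3) + μ = 0 by ring,
    single_zero_one, one_mul]

theorem coeff_ne_zero_of_pow_three_eq [CommRing R] [IsDomain R] [CharP R 3] (n : ℕ) {μ : Γ}
    (hμ : 0 < μ) {u : HahnSeries Γ R} (hu : u ^ 3 = 1 + single μ 1 * u) :
    u.coeff (μ / 2 * (1 - 3⁻¹ ^ n)) ≠ 0 := by
  induction n generalizing μ u with
  | zero =>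
    simpa [order_eq_zero_of_pow_three_eq hμ hu] using
      coeff_order_eq_zero.not.mpr (fun h : u = 0 => by simp [h] at hu)
  | succ n ih =>
    obtain ⟨v, hv, rfl⟩ := exists_pow_three_eq_of_pow_three_eq hu
    have hexp : μ / 2 * (1 - 3⁻¹ ^ (n + 1)) = μ / 3 + μ / 3 / 2 * (1 - 3⁻¹ ^ n) := by ring
    have hpos : 0 < μ / 2 * (1 - 3⁻¹ ^ (n + 1)) := by
      have : (3⁻¹ : Γ) ^ (n + 1) < 1 := pow_lt_one₀ (by positivity) (by norm_num) n.succ_ne_zero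
      nlinarith
    rw [coeff_add, coeff_one, if_neg hpos.ne', zero_add, coeff_single_mul, one_mul, hexp,
      add_sub_cancel_left]
    exact ih (by positivity) hv

end HahnSeries

namespace Novikov

theorem coe_novikovT (F : Type*) [Field F] (c : ℝ) :
    (NovikovT F c : HahnSeries ℝ F) = HahnSeries.single c 1 :=
  rfl

theorem pow_three_sub_novikovT_mul_sub_one_ne_zero {F : Type*} [Field F] [CharP F 3] {lam : ℝ}
    (hlam : 0 < lam) (x : Novikov F) : x ^ 3 - NovikovT F lam * x - 1 ≠ 0 := by
  intro hx
  have hx' : (x : HahnSeries ℝ F) ^ 3 = 1 + HahnSeries.single lam 1 * (x : HahnSeries ℝ F) := by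
    have := congrArg Subtype.val hx
    push_cast [coe_novikovT] at this
    linear_combination this
  set s : ℕ → ℝ := fun n => lam / 2 * (1 - 3⁻¹ ^ n)
  have hs : StrictMono s := fun m n hmn => by
    have := pow_lt_pow_right_of_lt_one₀ (a := (3⁻¹ : ℝ)) (by norm_num) (by norm_num) hmn
    simp only [s]; nlinarith
  refine Set.infinite_of_injective_forall_mem (s := x.val.support ∩ Set.Iic lam) hs.injective
    (fun n => ⟨?_, ?_⟩) (x.2 lam)
  · exact HahnSeries.coeff_ne_zero_of_pow_three_eq n hlam hx'
  · have : (0 : ℝ) < 3⁻¹ ^ n := by positivity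
    simp only [s, Set.mem_Iic]; nlinarith

end Novikov

/-- **Statement 2** (Lemma 10.18 and Example 10.17 of Fukaya–Oh–Ohta–Ono, *Lagrangian Floer
theory on compact toric manifolds I*).  Let `F` be a field of characteristic `3` and `λ > 0`
a real number.  Then the equation `x³ - T^λ x - 1 = 0` has no solution `x ∈ Λ₀^F`.
Consequently the universal Novikov field `Λ^F` is not algebraically closed: some
nonconstant polynomial over `Λ^F` has no root in `Λ^F`. -/
theorem novikov_char_three_not_algClosed
    (F : Type*) [Field F] [CharP F 3] (lam : ℝ) (hlam : 0 < lam) :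
    (¬ ∃ x : Novikov F, MemLambda0 x ∧ x ^ 3 - NovikovT F lam * x - 1 = 0) ∧
    ∃ p : Polynomial (Novikov F), 1 ≤ p.degree ∧ ∀ x : Novikov F, Polynomial.eval x p ≠ 0 := by
  open Polynomial in
  refine ⟨fun ⟨x, _, hx⟩ => Novikov.pow_three_sub_novikovT_mul_sub_one_ne_zero hlam x hx,
    X ^ 3 - C (NovikovT F lam) * X - 1, ?_, fun x => ?_⟩
  · have hdeg : (X ^ 3 - C (NovikovT F lam) * X - 1 : (Novikov F)[X]).degree = 3 := by
      compute_degree!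
    rw [hdeg]
    exact_mod_cast Nat.one_le_ofNat
  · simpa using Novikov.pow_three_sub_novikovT_mul_sub_one_ne_zero hlam x
end
end

section
/- Let d ≥ 1 and let w_1, …, w_a ∈ ℝ^d be vectors such that for every x ∈ ℝ^d ∖ {0} there exists j with ⟨w_j, x⟩ > 0. Then for any positive real numbers c_1, …, c_a the function f(x) = Σ_{j=1}^a c_j exp(⟨w_j, x⟩) satisfies lim_{t→+∞} f(t x) = +∞ for every x ≠ 0, and f attains its global minimum at some point of ℝ^d. -/
/-!
Replacing each `exp (ℓ j x)` by the smaller `max (ℓ j x) 0` gives the function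
`φ x = ∑ j, c j * max (ℓ j x) 0`, which is continuous, positively homogeneous and, by the
hypothesis on the `w j`, positive away from `0`. Its minimum `δ > 0` on the unit sphere yields
`f x ≥ φ x ≥ δ ‖x‖`, so `f` tends to infinity at infinity; both claims follow from this
coercivity, the second by the extreme value theorem.
-/

open Filter Real Finset

section

variable {E ι : Type*} [NormedAddCommGroup E] [NormedSpace ℝ E] [ProperSpace E] [Fintype ι]

theorem exists_pos_mul_norm_le_of_pos_of_homogeneous {φ : E → ℝ} (hφ : Continuous φ)
    (hsmul : ∀ t : ℝ, 0 ≤ t → ∀ x, φ (t • x) = t * φ x) (hpos : ∀ x, x ≠ 0 → 0 < φ x) :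
    ∃ δ > 0, ∀ x, δ * ‖x‖ ≤ φ x := by
  obtain ⟨δ, hδ, hδφ⟩ := (isCompact_sphere (0 : E) 1).exists_forall_le' hφ.continuousOn
    fun u hu => hpos u (Metric.ne_of_mem_sphere hu one_ne_zero)
  refine ⟨δ, hδ, fun x => ?_⟩
  rcases eq_or_ne x 0 with rfl | hx
  · simpa using (hsmul 0 le_rfl 0).ge
  · have hnx : 0 < ‖x‖ := norm_pos_iff.mpr hx
    have hu : ‖x‖⁻¹ • x ∈ Metric.sphere (0 : E) 1 := by simp [norm_smul, hnx.ne']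
    calc δ * ‖x‖ ≤ φ (‖x‖⁻¹ • x) * ‖x‖ := by gcongr; exact hδφ _ hu
      _ = φ x := by
        rw [hsmul _ (inv_nonneg.mpr hnx.le), mul_comm, ← mul_assoc, mul_inv_cancel₀ hnx.ne',
          one_mul]

theorem tendsto_smul_atTop_cocompact {x : E} (hx : x ≠ 0) :
    Tendsto (fun t : ℝ => t • x) atTop (cocompact E) := by
  rw [← Metric.cobounded_eq_cocompact, ← tendsto_norm_atTop_iff_cobounded]
  simp_rw [norm_smul]
  exact tendsto_norm_atTop_atTop.atTop_mul_const (norm_pos_iff.mpr hx)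

theorem tendsto_sum_mul_exp_cocompact {ℓ : ι → StrongDual ℝ E}
    (hℓ : ∀ x, x ≠ 0 → ∃ j, 0 < ℓ j x) {c : ι → ℝ} (hc : ∀ j, 0 < c j) :
    Tendsto (fun x => ∑ j, c j * exp (ℓ j x)) (cocompact E) atTop := by
  obtain ⟨δ, hδ, hδφ⟩ := exists_pos_mul_norm_le_of_pos_of_homogeneous
    (φ := fun x => ∑ j, c j * max (ℓ j x) 0) (by fun_prop)
    (fun t ht x => by
      simp only [map_smul, smul_eq_mul, mul_sum]
      refine sum_congr rfl fun j _ => ?_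
      rw [mul_left_comm t, mul_max_of_nonneg _ _ ht, mul_zero])
    (fun x hx => by
      obtain ⟨j, hj⟩ := hℓ x hx
      exact sum_pos' (fun j _ => mul_nonneg (hc j).le (le_max_right _ _))
        ⟨j, mem_univ j, mul_pos (hc j) (lt_max_of_lt_left hj)⟩)
  refine tendsto_atTop_mono (fun x => (hδφ x).trans (sum_le_sum fun j _ => ?_))
    (tendsto_norm_cocompact_atTop.const_mul_atTop hδ)
  gcongr
  · exact (hc j).le
  · exact max_le (by linarith [add_one_le_exp (ℓ j x)]) (exp_pos _).le

end

theorem exp_sum_tendsto_atTop_and_attains_min_general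
    (d a : ℕ) (w : Fin a → Fin d → ℝ)
    (hw : ∀ x : Fin d → ℝ, x ≠ 0 → ∃ j, 0 < ∑ i, w j i * x i)
    (c : Fin a → ℝ) (hc : ∀ j, 0 < c j) :
    (∀ x : Fin d → ℝ, x ≠ 0 →
      Filter.Tendsto (fun t : ℝ => ∑ j, c j * Real.exp (∑ i, w j i * (t * x i)))
        Filter.atTop Filter.atTop) ∧
    ∃ x₀ : Fin d → ℝ, ∀ x : Fin d → ℝ,
      (∑ j, c j * Real.exp (∑ i, w j i * x₀ i)) ≤ ∑ j, c j * Real.exp (∑ i, w j i * x i) := by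
  let ℓ : Fin a → StrongDual ℝ (Fin d → ℝ) := fun j => ∑ i, w j i • ContinuousLinearMap.proj i
  have hℓ : ∀ j x, ℓ j x = ∑ i, w j i * x i := fun j x => by simp [ℓ]
  have hf := tendsto_sum_mul_exp_cocompact (ℓ := ℓ) (by simpa only [hℓ] using hw) hc
  simp only [hℓ] at hf
  refine ⟨fun x hx => ?_, (by fun_prop : Continuous _).exists_forall_le hf⟩
  simpa only [Function.comp_def, Pi.smul_apply, smul_eq_mul] using
    hf.comp (tendsto_smul_atTop_cocompact hx)

/-- **Statement 5** (the key analytic step in Lemma 9.17 of Fukaya–Oh–Ohta–Ono,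
*Lagrangian Floer theory on compact toric manifolds I*).  Let `d ≥ 1` and let
`w₁, …, w_a ∈ ℝ^d` be vectors such that for every `x ≠ 0` there is `j` with `⟨w_j, x⟩ > 0`.
Then for any positive reals `c₁, …, c_a` the function `f(x) = Σ_j c_j exp ⟨w_j, x⟩`
satisfies `f(t x) → ∞` as `t → ∞` for every `x ≠ 0`, and `f` attains its global minimum
at some point of `ℝ^d`. -/
theorem exp_sum_tendsto_atTop_and_attains_min
    (d a : ℕ) (hd : 1 ≤ d) (w : Fin a → Fin d → ℝ)
    (hw : ∀ x : Fin d → ℝ, x ≠ 0 → ∃ j, 0 < ∑ i, w j i * x i)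
    (c : Fin a → ℝ) (hc : ∀ j, 0 < c j) :
    (∀ x : Fin d → ℝ, x ≠ 0 →
      Filter.Tendsto (fun t : ℝ => ∑ j, c j * Real.exp (∑ i, w j i * (t * x i)))
        Filter.atTop Filter.atTop) ∧
    ∃ x₀ : Fin d → ℝ, ∀ x : Fin d → ℝ,
      (∑ j, c j * Real.exp (∑ i, w j i * x₀ i)) ≤ ∑ j, c j * Real.exp (∑ i, w j i * x i) :=
  exp_sum_tendsto_atTop_and_attains_min_general d a w hw c hc
end

section
/- For each integer N ≥ 1 let 𝔐_N be a nonempty complex affine algebraic variety (the zero set of finitely many polynomials in some ℂ^{d_N}), and for N₁ > N₂ let I_{N₁,N₂} : 𝔐_{N₁} → 𝔐_{N₂} be morphisms (restrictions of polynomial maps) satisfying I_{N₂,N₃} ∘ I_{N₁,N₂} = I_{N₁,N₃} whenever N₁ > N₂ > N₃. Then ⋂_{N>1} Im(I_{N,1}) ≠ ∅. -/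
/-!
A point of `⋂_N Im I_{N,1}` is produced from a thread: a compatible family `(x_N)` of points
`x_N ∈ 𝔐_N`, i.e. a point of the inverse limit. Such families are the common zeros of a
countable set of polynomials in the countably many coordinates of all the `ℂ^{d_N}`. Each finite
subset of these equations only involves levels below some `M`, where the images of any point
of `𝔐_M` solve it; hence the equations generate a proper ideal. Because `ℂ` is uncountable,
the weak Nullstellensatz still holds in countably many variables, which gives a common zero.
-/

open MvPolynomial Cardinal

universe u v

theorem Algebra.isAlgebraic_of_rank_lt_mk {K : Type u} {L : Type v} [Field K] [Field L]
    [Algebra K L] (h : lift.{u} (Module.rank K L) < lift.{v} #K) : Algebra.IsAlgebraic K L :=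
  ⟨fun _ => by_contra fun hx =>
    h.not_ge (Transcendental.linearIndependent_sub_inv hx).cardinal_lift_le_rank⟩

theorem MvPolynomial.exists_eval_eq_zero_of_ne_top {σ : Type u} {K : Type v} [Countable σ]
    [Field K] [IsAlgClosed K] (hK : ℵ₀ < #K) {J : Ideal (MvPolynomial σ K)} (hJ : J ≠ ⊤) :
    ∃ x : σ → K, ∀ p ∈ J, eval x p = 0 := by
  -- The residue field has countable dimension over `K`, so it is algebraic, hence equal to `K`.
  obtain ⟨m, hm, hJm⟩ := Ideal.exists_le_maximal J hJ
  let _ := Ideal.Quotient.field m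
  have hrank : Module.rank K (MvPolynomial σ K ⧸ m) ≤ ℵ₀ :=
    calc Module.rank K (MvPolynomial σ K ⧸ m)
        ≤ Module.rank K (MvPolynomial σ K) :=
          LinearMap.rank_le_of_surjective (Ideal.Quotient.mkₐ K m).toLinearMap
            Ideal.Quotient.mk_surjective
      _ = lift.{v} #(σ →₀ ℕ) := MvPolynomial.rank_eq_lift
      _ ≤ ℵ₀ := by simp [mk_le_aleph0]
  have := Algebra.isAlgebraic_of_rank_lt_mk (L := MvPolynomial σ K ⧸ m)
    ((lift_le_aleph0.2 hrank).trans_lt (aleph0_lt_lift.2 hK))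
  have hbij :=
    IsAlgClosed.algebraMap_bijective_of_isIntegral (k := K) (K := MvPolynomial σ K ⧸ m)
  choose x hx using fun s => hbij.2 (Ideal.Quotient.mk m (X s))
  have hmk : (Ideal.Quotient.mkₐ K m) = (Algebra.ofId K _).comp (aeval x) :=
    MvPolynomial.algHom_ext fun s => by simp [hx]
  refine ⟨x, fun p hp => hbij.1 ?_⟩
  have hp' := AlgHom.congr_fun hmk p
  rw [Ideal.Quotient.mkₐ_eq_mk, Ideal.Quotient.eq_zero_iff_mem.2 (hJm hp)] at hp'
  simpa using hp'.symm

theorem MvPolynomial.exists_common_zero_of_directed {σ : Type u} {K : Type v} [Countable σ]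
    [Field K] [IsAlgClosed K] (hK : ℵ₀ < #K) {ι : Type*} [Nonempty ι]
    {S : ι → Set (MvPolynomial σ K)} (hS : Directed (· ⊆ ·) S)
    (h : ∀ i, ∃ x : σ → K, ∀ p ∈ S i, eval x p = 0) :
    ∃ x : σ → K, ∀ i, ∀ p ∈ S i, eval x p = 0 := by
  have hspan : Ideal.span (⋃ i, S i) ≠ ⊤ := by
    rw [Ne, Ideal.span_eq_top_iff_finite]
    rintro ⟨s, hsS, hs⟩
    obtain ⟨i, hsi⟩ := hS.exists_mem_subset_of_finset_subset_biUnion hsS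
    obtain ⟨x, hx⟩ := h i
    have : Ideal.span (s : Set (MvPolynomial σ K)) ≤ RingHom.ker (eval x) :=
      Ideal.span_le.2 fun p hp => hx p (hsi hp)
    simpa using this (hs ▸ Submodule.mem_top : (1 : MvPolynomial σ K) ∈ _)
  obtain ⟨x, hx⟩ := exists_eval_eq_zero_of_ne_top hK hspan
  exact ⟨x, fun i p hp => hx p (Ideal.subset_span (Set.mem_iUnion_of_mem i hp))⟩

section InverseSystem

variable {K : Type*} {d : ℕ → ℕ} (V : (N : ℕ) → Set (Fin (d N) → K))
  (I : (N₁ N₂ : ℕ) → (Fin (d N₁) → K) → (Fin (d N₂) → K))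

def IsThreadBelow (M : ℕ) (x : (N : ℕ) → Fin (d N) → K) : Prop :=
  (∀ N, 1 ≤ N → N < M → x N ∈ V N) ∧
    ∀ N₁ N₂, 1 ≤ N₂ → N₂ < N₁ → N₁ < M → I N₁ N₂ (x N₁) = x N₂

variable {V I} in
theorem isThreadBelow_transition
    (hmaps : ∀ N₁ N₂, 1 ≤ N₂ → N₂ < N₁ → ∀ x ∈ V N₁, I N₁ N₂ x ∈ V N₂)
    (hcomp : ∀ N₁ N₂ N₃, 1 ≤ N₃ → N₃ < N₂ → N₂ < N₁ → ∀ x ∈ V N₁,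
      I N₂ N₃ (I N₁ N₂ x) = I N₁ N₃ x)
    {M : ℕ} {v : Fin (d M) → K} (hv : v ∈ V M) : IsThreadBelow V I M (fun N => I M N v) :=
  ⟨fun N h1 hN => hmaps M N h1 hN v hv,
    fun N₁ N₂ h1 h12 hN₁ => hcomp M N₁ N₂ h1 h12 hN₁ v hv⟩

variable [CommRing K]

def threadEquationsBelow (M : ℕ) : Set (MvPolynomial (Σ N, Fin (d N)) K) :=
  {g | ∃ N q, 1 ≤ N ∧ N < M ∧ (∀ y ∈ V N, eval y q = 0) ∧ g = rename (Sigma.mk N) q} ∪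
    {g | ∃ N₁ N₂ j q, 1 ≤ N₂ ∧ N₂ < N₁ ∧ N₁ < M ∧ (∀ y, eval y q = I N₁ N₂ y j) ∧
      g = X ⟨N₂, j⟩ - rename (Sigma.mk N₁) q}

variable {V I}

theorem threadEquationsBelow_mono : Monotone (threadEquationsBelow V I) := by
  rintro M M' hM g (⟨N, q, h1, hN, hq, rfl⟩ | ⟨N₁, N₂, j, q, h1, h12, hN₁, hq, rfl⟩)
  · exact Or.inl ⟨N, q, h1, hN.trans_le hM, hq, rfl⟩
  · exact Or.inr ⟨N₁, N₂, j, q, h1, h12, hN₁.trans_le hM, hq, rfl⟩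

theorem IsThreadBelow.eval_eq_zero {M : ℕ} {x : (N : ℕ) → Fin (d N) → K}
    (hx : IsThreadBelow V I M x) :
    ∀ g ∈ threadEquationsBelow V I M, eval (Sigma.uncurry x) g = 0 := by
  rintro g (⟨N, q, h1, hN, hq, rfl⟩ | ⟨N₁, N₂, j, q, h1, h12, hN₁, hq, rfl⟩)
  · rw [eval_rename]
    exact hq _ (hx.1 N h1 hN)
  · rw [map_sub, eval_X, eval_rename, sub_eq_zero]
    exact (congr_fun (hx.2 N₁ N₂ h1 h12 hN₁) j).symm.trans (hq _).symm

theorem isThreadBelow_of_eval_eq_zero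
    (hvar : ∀ N, 1 ≤ N → ∃ (k : ℕ) (p : Fin k → MvPolynomial (Fin (d N)) K),
      V N = {x | ∀ a, eval x (p a) = 0})
    (hpoly : ∀ N₁ N₂, 1 ≤ N₂ → N₂ < N₁ →
      ∃ P : Fin (d N₂) → MvPolynomial (Fin (d N₁)) K, ∀ x j, I N₁ N₂ x j = eval x (P j))
    {M : ℕ} {x : (N : ℕ) → Fin (d N) → K}
    (hx : ∀ g ∈ threadEquationsBelow V I M, eval (Sigma.uncurry x) g = 0) :
    IsThreadBelow V I M x := by
  refine ⟨fun N h1 hN => ?_, fun N₁ N₂ h1 h12 hN₁ => funext fun j => ?_⟩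
  · obtain ⟨k, p, hV⟩ := hvar N h1
    rw [hV]
    intro a
    have := hx _ (Or.inl ⟨N, p a, h1, hN, fun y hy => (hV ▸ hy : _) a, rfl⟩)
    rwa [eval_rename] at this
  · obtain ⟨P, hP⟩ := hpoly N₁ N₂ h1 h12
    have := hx _ (Or.inr ⟨N₁, N₂, j, P j, h1, h12, hN₁, fun y => (hP y j).symm, rfl⟩)
    rw [map_sub, eval_X, eval_rename, sub_eq_zero] at this
    exact (hP _ j).trans this.symm

end InverseSystem

/-- Lemma 10.14 of Fukaya–Oh–Ohta–Ono, *Lagrangian Floer theory on compact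
toric manifolds I*.  For each `N ≥ 1` let `𝔐_N` be a nonempty complex affine algebraic
variety (the common zero set of finitely many polynomials in some `ℂ^{d_N}`), and for
`N₁ > N₂ ≥ 1` let `I_{N₁,N₂} : 𝔐_{N₁} → 𝔐_{N₂}` be morphisms (restrictions of polynomial
maps) with `I_{N₂,N₃} ∘ I_{N₁,N₂} = I_{N₁,N₃}` on `𝔐_{N₁}` whenever `N₁ > N₂ > N₃ ≥ 1`.
Then `⋂_{N>1} Im (I_{N,1}) ≠ ∅`. -/
theorem inverse_system_of_affine_varieties_images_inter_nonempty
    (d : ℕ → ℕ) (V : (N : ℕ) → Set (Fin (d N) → ℂ))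
    (hvar : ∀ N, 1 ≤ N → ∃ (k : ℕ) (p : Fin k → MvPolynomial (Fin (d N)) ℂ),
      V N = {x | ∀ a, MvPolynomial.eval x (p a) = 0})
    (hne : ∀ N, 1 ≤ N → (V N).Nonempty)
    (I : (N₁ N₂ : ℕ) → (Fin (d N₁) → ℂ) → (Fin (d N₂) → ℂ))
    (hpoly : ∀ N₁ N₂, 1 ≤ N₂ → N₂ < N₁ →
      ∃ P : Fin (d N₂) → MvPolynomial (Fin (d N₁)) ℂ,
        ∀ x j, I N₁ N₂ x j = MvPolynomial.eval x (P j))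
    (hmaps : ∀ N₁ N₂, 1 ≤ N₂ → N₂ < N₁ → ∀ x ∈ V N₁, I N₁ N₂ x ∈ V N₂)
    (hcomp : ∀ N₁ N₂ N₃, 1 ≤ N₃ → N₃ < N₂ → N₂ < N₁ → ∀ x ∈ V N₁,
      I N₂ N₃ (I N₁ N₂ x) = I N₁ N₃ x) :
    ∃ y ∈ V 1, ∀ N, 1 < N → ∃ x ∈ V N, I N 1 x = y := by
  have hℂ : ℵ₀ < #ℂ := mk_complex ▸ aleph0_lt_continuum
  have hlevel (M : ℕ) : ∃ x, ∀ g ∈ threadEquationsBelow V I (M + 1), eval x g = 0 :=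
    ⟨_, (isThreadBelow_transition hmaps hcomp
      (hne (M + 1) (Nat.le_add_left 1 M)).some_mem).eval_eq_zero⟩
  obtain ⟨x, hx⟩ := exists_common_zero_of_directed hℂ
    (threadEquationsBelow_mono.comp fun _ _ => Nat.succ_le_succ).directed_le hlevel
  set y : (N : ℕ) → Fin (d N) → ℂ := fun N j => x ⟨N, j⟩
  have hthread (M : ℕ) : IsThreadBelow V I (M + 1) y :=
    isThreadBelow_of_eval_eq_zero hvar hpoly (hx M)
  refine ⟨y 1, (hthread 1).1 1 le_rfl one_lt_two, fun N hN => ?_⟩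
  exact ⟨y N, (hthread N).1 N hN.le N.lt_add_one,
    (hthread N).2 N 1 le_rfl hN N.lt_add_one⟩
end

section
/- For each integer N ≥ 1 let 𝔐_N be a nonempty complex affine algebraic variety (the zero set of finitely many polynomials in some ℂ^{d_N}), and for N₁ > N₂ let I_{N₁,N₂} : 𝔐_{N₁} → 𝔐_{N₂} be morphisms (restrictions of polynomial maps) satisfying I_{N₂,N₃} ∘ I_{N₁,N₂} = I_{N₁,N₃} whenever N₁ > N₂ > N₃. Then the inverse limit of the system is nonempty: there exists a sequence (x_N)_{N≥1} with x_N ∈ 𝔐_N and I_{N,N'}(x_N) = x_{N'} for all N > N' ≥ 1. -/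
noncomputable section

open MvPolynomial Cardinal

/-- A field that is a quotient of a multivariate polynomial ring over `ℂ` in countably
many variables is equal to `ℂ`: every element is algebraic over `ℂ`. -/
lemma aux_isAlgebraic_of_quotient {σ : Type} [Countable σ]
    (m : Ideal (MvPolynomial σ ℂ)) [m.IsMaximal] :
    Algebra.IsAlgebraic ℂ (MvPolynomial σ ℂ ⧸ m) := by
  letI : Field (MvPolynomial σ ℂ ⧸ m) := Ideal.Quotient.field m
  have hrank : Module.rank ℂ (MvPolynomial σ ℂ ⧸ m) ≤ Cardinal.aleph0 := by
    have hsurj : Function.Surjective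
        ((Ideal.Quotient.mkₐ ℂ m).toLinearMap : MvPolynomial σ ℂ →ₗ[ℂ] _) :=
      Ideal.Quotient.mk_surjective
    calc Module.rank ℂ (MvPolynomial σ ℂ ⧸ m)
        ≤ Module.rank ℂ (MvPolynomial σ ℂ) :=
          LinearMap.rank_le_of_surjective _ hsurj
      _ = #(σ →₀ ℕ) := MvPolynomial.rank_eq
      _ ≤ Cardinal.aleph0 := Cardinal.mk_le_aleph0
  constructor
  intro t
  by_contra ht
  have H : Transcendental ℂ t := ht
  have h1 := H.linearIndependent_sub_inv.cardinal_le_rank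
  have h2 : (#ℂ) ≤ Cardinal.aleph0 := h1.trans hrank
  rw [mk_complex] at h2
  exact absurd h2 (not_le.mpr Cardinal.aleph0_lt_continuum)

/-- **Statement 8** (Lemma 10.15 of Fukaya–Oh–Ohta–Ono, *Lagrangian Floer theory on compact
toric manifolds I*).  For each `N ≥ 1` let `𝔐_N` be a nonempty complex affine algebraic
variety (the common zero set of finitely many polynomials in some `ℂ^{d_N}`), and for
`N₁ > N₂ ≥ 1` let `I_{N₁,N₂} : 𝔐_{N₁} → 𝔐_{N₂}` be morphisms (restrictions of polynomial
maps) with `I_{N₂,N₃} ∘ I_{N₁,N₂} = I_{N₁,N₃}` on `𝔐_{N₁}` whenever `N₁ > N₂ > N₃ ≥ 1`.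
Then the inverse limit of the system is nonempty. -/
theorem inverse_system_of_affine_varieties_inverse_limit_nonempty
    (d : ℕ → ℕ) (V : (N : ℕ) → Set (Fin (d N) → ℂ))
    (hvar : ∀ N, 1 ≤ N → ∃ (k : ℕ) (p : Fin k → MvPolynomial (Fin (d N)) ℂ),
      V N = {x | ∀ a, MvPolynomial.eval x (p a) = 0})
    (hne : ∀ N, 1 ≤ N → (V N).Nonempty)
    (I : (N₁ N₂ : ℕ) → (Fin (d N₁) → ℂ) → (Fin (d N₂) → ℂ))
    (hpoly : ∀ N₁ N₂, 1 ≤ N₂ → N₂ < N₁ →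
      ∃ P : Fin (d N₂) → MvPolynomial (Fin (d N₁)) ℂ,
        ∀ x j, I N₁ N₂ x j = MvPolynomial.eval x (P j))
    (hmaps : ∀ N₁ N₂, 1 ≤ N₂ → N₂ < N₁ → ∀ x ∈ V N₁, I N₁ N₂ x ∈ V N₂)
    (hcomp : ∀ N₁ N₂ N₃, 1 ≤ N₃ → N₃ < N₂ → N₂ < N₁ → ∀ x ∈ V N₁,
      I N₂ N₃ (I N₁ N₂ x) = I N₁ N₃ x) :
    ∃ x : (N : ℕ) → (Fin (d N) → ℂ),
      (∀ N, 1 ≤ N → x N ∈ V N) ∧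
      ∀ N N', 1 ≤ N' → N' < N → I N N' (x N) = x N' := by
  classical
  -- generators with levels ≤ M
  set Gen : ℕ → Set (MvPolynomial (Σ N : ℕ, Fin (d N)) ℂ) := fun M => {g |
      (∃ N q, 1 ≤ N ∧ N ≤ M ∧ (∀ y ∈ V N, MvPolynomial.eval y q = 0) ∧
        g = rename (Sigma.mk N) q) ∨
      (∃ N N' : ℕ, ∃ j : Fin (d N'), ∃ q, 1 ≤ N' ∧ N' < N ∧ N ≤ M ∧
        (∀ y, I N N' y j = MvPolynomial.eval y q) ∧
        g = X ⟨N', j⟩ - rename (Sigma.mk N) q)} with hGen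
  have hGenMono : Monotone Gen := by
    intro a b hab g hg
    rcases hg with ⟨N, q, h1, h2, h3, h4⟩ | ⟨N, N', j, q, h1, h2, h3, h4, h5⟩
    · exact Or.inl ⟨N, q, h1, h2.trans hab, h3, h4⟩
    · exact Or.inr ⟨N, N', j, q, h1, h2, h3.trans hab, h4, h5⟩
  set J : Ideal (MvPolynomial (Σ N : ℕ, Fin (d N)) ℂ) := Ideal.span (⋃ M, Gen M) with hJ
  -- Step A: J is a proper ideal
  have hJne : J ≠ ⊤ := by
    intro htop
    have h1 : (1 : MvPolynomial (Σ N : ℕ, Fin (d N)) ℂ) ∈ J := htop ▸ Submodule.mem_top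
    rw [hJ, Ideal.span_iUnion] at h1
    have hdir : Directed (· ≤ ·) fun M => Ideal.span (Gen M) := fun a b =>
      ⟨max a b, Ideal.span_mono (hGenMono (le_max_left a b)),
        Ideal.span_mono (hGenMono (le_max_right a b))⟩
    obtain ⟨M, hM⟩ := (Submodule.mem_iSup_of_directed _ hdir).mp h1
    -- take a point of `V (M+1)` and push it to all lower levels
    obtain ⟨u, hu⟩ := hne (M + 1) (Nat.le_add_left 1 M)
    set pt : (Σ N : ℕ, Fin (d N)) → ℂ := fun s => I (M + 1) s.1 u s.2 with hpt
    have hkill : ∀ g ∈ Gen M, MvPolynomial.eval pt g = 0 := by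
      intro g hg
      rcases hg with ⟨N, q, h1, h2, h3, h4⟩ | ⟨N, N', j, q, h1, h2, h3, h4, h5⟩
      · subst h4
        rw [eval_rename]
        have : (pt ∘ Sigma.mk N) = I (M + 1) N u := rfl
        rw [this]
        exact h3 _ (hmaps (M + 1) N h1 (Nat.lt_succ_of_le h2) u hu)
      · subst h5
        rw [map_sub, eval_rename, eval_X]
        have hc : (pt ∘ Sigma.mk N) = I (M + 1) N u := rfl
        rw [hc, ← h4]
        have : pt ⟨N', j⟩ = I (M + 1) N' u j := rfl
        rw [this, hcomp (M + 1) N N' h1 h2 (Nat.lt_succ_of_le h3) u hu, sub_self]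
    have hle : Ideal.span (Gen M) ≤ RingHom.ker (MvPolynomial.eval pt) :=
      Ideal.span_le.mpr (fun g hg => hkill g hg)
    have : MvPolynomial.eval pt (1 : MvPolynomial (Σ N : ℕ, Fin (d N)) ℂ) = 0 := hle hM
    simp at this
  -- Step B: take a maximal ideal containing J and build a ℂ-point
  obtain ⟨m, hm, hJm⟩ := Ideal.exists_le_maximal J hJne
  haveI := hm
  letI : Field (MvPolynomial (Σ N : ℕ, Fin (d N)) ℂ ⧸ m) := Ideal.Quotient.field m
  haveI : Algebra.IsAlgebraic ℂ (MvPolynomial (Σ N : ℕ, Fin (d N)) ℂ ⧸ m) := aux_isAlgebraic_of_quotient m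
  haveI : Algebra.IsIntegral ℂ (MvPolynomial (Σ N : ℕ, Fin (d N)) ℂ ⧸ m) :=
    Algebra.IsAlgebraic.isIntegral
  have hsurj : Function.Surjective (algebraMap ℂ (MvPolynomial (Σ N : ℕ, Fin (d N)) ℂ ⧸ m)) :=
    IsAlgClosed.algebraMap_bijective_of_isIntegral.2
  have hbij : Function.Bijective (Algebra.ofId ℂ (MvPolynomial (Σ N : ℕ, Fin (d N)) ℂ ⧸ m)) :=
    ⟨(algebraMap ℂ (MvPolynomial (Σ N : ℕ, Fin (d N)) ℂ ⧸ m)).injective, hsurj⟩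
  set e : ℂ ≃ₐ[ℂ] (MvPolynomial (Σ N : ℕ, Fin (d N)) ℂ ⧸ m) := AlgEquiv.ofBijective _ hbij with he
  set ψ : MvPolynomial (Σ N : ℕ, Fin (d N)) ℂ →ₐ[ℂ] ℂ := (e.symm.toAlgHom).comp (Ideal.Quotient.mkₐ ℂ m) with hψ
  have hψ0 : ∀ g ∈ J, ψ g = 0 := by
    intro g hg
    have : Ideal.Quotient.mk m g = 0 := (Ideal.Quotient.eq_zero_iff_mem).mpr (hJm hg)
    simp [hψ, Ideal.Quotient.mkₐ_eq_mk, this]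
  -- the candidate point
  set x : (N : ℕ) → Fin (d N) → ℂ := fun N i => ψ (X ⟨N, i⟩) with hx
  have hψeval : ∀ (N : ℕ) (q : MvPolynomial (Fin (d N)) ℂ),
      ψ (rename (Sigma.mk N) q) = MvPolynomial.eval (x N) q := by
    intro N q
    have h1 : ψ = aeval (ψ ∘ X) := aeval_unique ψ
    rw [h1, aeval_rename]
    have h2 : ((ψ ∘ X) ∘ Sigma.mk N) = x N := rfl
    rw [h2]
    rw [aeval_def, Algebra.algebraMap_self]
    rfl
  have hgen : ∀ M, ∀ g ∈ Gen M, ψ g = 0 := fun M g hg =>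
    hψ0 g (Ideal.subset_span (Set.mem_iUnion.mpr ⟨M, hg⟩))
  refine ⟨x, ?_, ?_⟩
  · -- x N ∈ V N
    intro N hN
    obtain ⟨k, p, hp⟩ := hvar N hN
    rw [hp]
    intro a
    have hmem : rename (Sigma.mk N) (p a) ∈ Gen N := by
      refine Or.inl ⟨N, p a, hN, le_refl N, ?_, rfl⟩
      intro y hy
      rw [hp] at hy
      exact hy a
    have := hgen N _ hmem
    rwa [hψeval] at this
  · -- compatibility
    intro N N' hN' hlt
    obtain ⟨P, hP⟩ := hpoly N N' hN' hlt
    funext j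
    have hmem : (X ⟨N', j⟩ - rename (Sigma.mk N) (P j) : MvPolynomial (Σ N : ℕ, Fin (d N)) ℂ) ∈ Gen N :=
      Or.inr ⟨N, N', j, P j, hN', hlt, le_refl N, fun y => hP y j, rfl⟩
    have h0 := hgen N _ hmem
    rw [map_sub, hψeval, sub_eq_zero] at h0
    have hXj : ψ (X ⟨N', j⟩) = x N' j := rfl
    rw [hP (x N) j, ← h0, hXj]
end
end

section
/- Let c = (c_1, …, c_m) ∈ ℤ^m satisfy Σ_{i=1}^m c_i v_i = 0, and write c_i = a_i − b_i where a_i, b_i ≥ 0 and a_i b_i = 0; let I = {i : a_i > 0} and J = {j : b_j > 0}. Then the real number ρ = Σ_{i∈I} a_i ℓ_i(u) − Σ_{j∈J} b_j ℓ_j(u) is independent of u ∈ ℝ^n, and the element r = Π_{i∈I} z_i^{a_i} − T^{ρ} Π_{j∈J} z_j^{b_j} belongs to the quantum Stanley–Reisner ideal SR_ω(X). -/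
noncomputable section

open scoped Classical Pointwise

variable (F : Type*) [Field F]

variable {F}

/-- The affine functions `ℓᵢ(u) = ⟨u, vᵢ⟩ - λᵢ` attached to a moment polytope. -/
def ell (n m : ℕ) (v : Fin m → Fin n → ℤ) (lam : Fin m → ℝ) (i : Fin m) (u : Fin n → ℝ) : ℝ :=
  (∑ j, u j * (v i j : ℝ)) - lam i

/-- The polytope `P = {u | ℓᵢ(u) ≥ 0 for all i}`. -/
def moment (n m : ℕ) (v : Fin m → Fin n → ℤ) (lam : Fin m → ℝ) : Set (Fin n → ℝ) :=
  {u | ∀ i, 0 ≤ ell n m v lam i u}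

/-- The facet `∂ᵢP = {u ∈ P | ℓᵢ(u) = 0}`. -/
def facet (n m : ℕ) (v : Fin m → Fin n → ℤ) (lam : Fin m → ℝ) (i : Fin m) :
    Set (Fin n → ℝ) :=
  {u ∈ moment n m v lam | ell n m v lam i u = 0}

/-- A subset `S ⊆ {1, …, m}` spans a cone of the normal fan iff `⋂_{i ∈ S} ∂ᵢP ≠ ∅`. -/
def SpansCone (n m : ℕ) (v : Fin m → Fin n → ℤ) (lam : Fin m → ℝ)
    (Sc : Finset (Fin m)) : Prop :=
  (⋂ i ∈ Sc, facet n m v lam i).Nonempty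

/-- A primitive collection: a subset which does not span a cone of the normal fan while
every proper subset does. -/
def IsPrimitiveCollection (n m : ℕ) (v : Fin m → Fin n → ℤ) (lam : Fin m → ℝ)
    (Pc : Finset (Fin m)) : Prop :=
  ¬ SpansCone n m v lam Pc ∧ ∀ Sc ⊂ Pc, SpansCone n m v lam Sc

/-- `P` is a (compact) Delzant polytope: every facet has dimension `n - 1`, and at every
vertex exactly `n` facets meet, whose normal vectors form a `ℤ`-basis of `ℤⁿ`. -/
def IsDelzant (n m : ℕ) (v : Fin m → Fin n → ℤ) (lam : Fin m → ℝ) : Prop :=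
  IsCompact (moment n m v lam) ∧ (interior (moment n m v lam)).Nonempty ∧
  (∀ i, Module.finrank ℝ (affineSpan ℝ (facet n m v lam i)).direction = n - 1) ∧
  ∀ u ∈ Set.extremePoints ℝ (moment n m v lam),
    ∃ σ : Fin n → Fin m, Function.Injective σ ∧
      {i | ell n m v lam i u = 0} = Set.range σ ∧
      IsUnit (Matrix.det (Matrix.of fun a b : Fin n => v (σ a) b))

/-- The universal Novikov field over `ℂ`, as a type. -/
def Lam : Type := ↥(Novikov ℂ)

instance : CommRing Lam := inferInstanceAs (CommRing ↥(Novikov ℂ))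

/-- The element `T^c` of `Λ^ℂ`. -/
def TPow (c : ℝ) : Lam := NovikovT ℂ c

/-- The generators `z(𝒫) = Π_{i∈𝒫} zᵢ - T^{ω(𝒫)} Π_{i'∈𝒫'} z_{i'}^{k_{i'}}` of the quantum
Stanley–Reisner ideal.  Here `ω(𝒫) = Σ_{i∈𝒫} ℓᵢ(u) - Σ_{i'∈𝒫'} k_{i'} ℓ_{i'}(u)`, which is
independent of `u` and equals `Σ_{i'∈𝒫'} k_{i'} λ_{i'} - Σ_{i∈𝒫} λᵢ`. -/
def SRgens (n m : ℕ) (v : Fin m → Fin n → ℤ) (lam : Fin m → ℝ) :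
    Set (MvPolynomial (Fin m) Lam) :=
  {q | ∃ (Pc Pc' : Finset (Fin m)) (k : Fin m → ℕ),
    IsPrimitiveCollection n m v lam Pc ∧ SpansCone n m v lam Pc' ∧
    (∀ i ∈ Pc', 0 < k i) ∧
    (∀ j, (∑ i ∈ Pc, v i j) = ∑ i ∈ Pc', (k i : ℤ) * v i j) ∧
    q = (∏ i ∈ Pc, MvPolynomial.X i) -
        MvPolynomial.C (TPow ((∑ i ∈ Pc', (k i : ℝ) * lam i) - ∑ i ∈ Pc, lam i)) *
          ∏ i ∈ Pc', MvPolynomial.X i ^ k i}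

/-- The quantum Stanley–Reisner ideal `SR_ω(X)`. -/
def SRideal (n m : ℕ) (v : Fin m → Fin n → ℤ) (lam : Fin m → ℝ) :
    Ideal (MvPolynomial (Fin m) Lam) :=
  Ideal.span (SRgens n m v lam)

/-- The linear relation ideal `P(X)`, generated by `Σᵢ v_{i,j} zᵢ` for `j = 1, …, n`. -/
def linearRelIdeal (n m : ℕ) (v : Fin m → Fin n → ℤ) :
    Ideal (MvPolynomial (Fin m) Lam) :=
  Ideal.span {q | ∃ j : Fin n, q = ∑ i, MvPolynomial.C ((v i j : ℤ) : Lam) * MvPolynomial.X i}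

/-- `(𝔶, u) ∈ Crit(𝔓𝔒₀)`: each coordinate `𝔶ⱼ` is a (unit) element of `Λ₀ ∖ Λ₊` and all
partial derivatives `∂𝔓𝔒₀^u/∂y_k = Σᵢ v_{i,k} T^{ℓᵢ(u)} y^{vᵢ - e_k}` of the leading order
potential function `𝔓𝔒₀^u = Σᵢ T^{ℓᵢ(u)} y^{vᵢ}` vanish at `𝔶`. -/
def IsCriticalPoint (n m : ℕ) (v : Fin m → Fin n → ℤ) (lam : Fin m → ℝ)
    (y : Fin n → Lamˣ) (u : Fin n → ℝ) : Prop :=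
  (∀ j, MemLambda0 (y j : Lam) ∧ ¬ MemLambdaPlus (y j : Lam)) ∧
  ∀ k : Fin n, (∑ i : Fin m, ((v i k : ℤ) : Lam) *
    (TPow (ell n m v lam i u) *
      ((∏ j, y j ^ ((v i j) - if j = k then 1 else 0) : Lamˣ) : Lam))) = 0

/-!
For exponent vectors `a, b ∈ ℕ^m` write `a ~ b` when `z^a - T^{λ·b - λ·a} z^b ∈ SR_ω(X)`; this is
a congruence of the additive monoid `ℕ^m`, and every primitive collection `𝒫` gives `1_𝒫 ~ k`,
with `k` supported on `𝒫'`. Such a `k` is found at a vertex of `P` minimising `⟨·, Σ_{i∈𝒫} vᵢ⟩`: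
there the Delzant condition writes `Σ_{i∈𝒫} vᵢ` as a nonnegative integer combination of the
normals of the facets through the vertex, and `ω(𝒫) = Σ_{i∈𝒫} ℓᵢ > 0` at the vertex because `𝒫`
spans no cone.

Replacing `1_𝒫 ≤ a` by `k` keeps `deg a = Σ aᵢ vᵢ` and raises the weight `λ·a` by
`ω(𝒫)`, while `λ·a ≤ ⟨u₀, deg a⟩` for any `u₀ ∈ P`; so every `a` is equivalent to some `a'` of the
same degree whose support spans a cone. Such an `a'` is determined by its degree, since its
support lies among the facets through a vertex minimising `⟨·, deg a'⟩`, whose normals form a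
basis of `ℤⁿ`. Hence `deg a = deg b` gives `a ~ b`, and `ρ = λ·b - λ·a`.
-/

open Finset MvPolynomial Filter Topology
open scoped Matrix

theorem IsCompact.exists_mem_extremePoints_isMinOn {E : Type*} [AddCommGroup E] [Module ℝ E]
    [TopologicalSpace E] [T2Space E] [IsTopologicalAddGroup E] [ContinuousSMul ℝ E]
    [LocallyConvexSpace ℝ E] {s : Set E} (hs : IsCompact s) (hne : s.Nonempty) (l : E →L[ℝ] ℝ) :
    ∃ x ∈ s.extremePoints ℝ, IsMinOn l s x := by
  obtain ⟨x₀, hx₀, hmin⟩ := hs.exists_isMinOn hne l.continuous.continuousOn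
  have hexp : IsExposed ℝ s {x ∈ s | ∀ y ∈ s, (-l) y ≤ (-l) x} := fun _ => ⟨-l, rfl⟩
  obtain ⟨x, hx⟩ := (hexp.isCompact hs).extremePoints_nonempty
    ⟨x₀, hx₀, fun y hy => neg_le_neg (hmin hy)⟩
  refine ⟨x, hexp.isExtreme.extremePoints_subset_extremePoints hx, fun y hy => ?_⟩
  simpa using hx.1.2 y hy

theorem exists_rel_of_bddAbove_of_step {α : Type*} {r : α → α → Prop} (hrefl : ∀ a, r a a)
    (htrans : ∀ a b c, r a b → r b c → r a c) {p : α → Prop} {f : α → ℝ} {ε : ℝ} (hε : 0 < ε)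
    (hstep : ∀ a, ¬ p a → ∃ b, r a b ∧ f a + ε ≤ f b) (a : α) (hbdd : BddAbove (f '' {b | r a b})) :
    ∃ b, r a b ∧ p b := by
  suffices key : ∀ N : ℕ, ∀ a, (∀ b, r a b → f b ≤ f a + N * ε) → ∃ b, r a b ∧ p b by
    obtain ⟨B, hB⟩ := hbdd
    obtain ⟨N, hN⟩ := exists_nat_ge ((B - f a) / ε)
    refine key N a fun b hab => (hB ⟨b, hab, rfl⟩).trans ?_
    linarith [(div_le_iff₀ hε).1 hN]
  intro N
  induction N with
  | zero =>
    intro a ha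
    by_contra hnone
    obtain ⟨b, hab, hfb⟩ := hstep a fun hpa => hnone ⟨a, hrefl a, hpa⟩
    have := ha b hab
    simp only [CharP.cast_eq_zero, zero_mul, add_zero] at this
    linarith
  | succ N ih =>
    intro a ha
    by_cases hpa : p a
    · exact ⟨a, hrefl a, hpa⟩
    obtain ⟨b, hab, hfb⟩ := hstep a hpa
    obtain ⟨c, hbc, hpc⟩ := ih b fun c hbc => by
      have := ha c (htrans a b c hab hbc)
      push_cast at this
      linarith
    exact ⟨c, htrans a b c hab hbc, hpc⟩

namespace Toric

lemma TPow_zero : TPow 0 = 1 :=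
  Subtype.ext HahnSeries.single_zero_one

lemma TPow_add (x y : ℝ) : TPow (x + y) = TPow x * TPow y := by
  apply Subtype.ext
  show HahnSeries.single (x + y) (1 : ℂ) = HahnSeries.single x 1 * HahnSeries.single y 1
  rw [HahnSeries.single_mul_single, one_mul]

variable {n m : ℕ}

def pairing (u : Fin n → ℝ) (w : Fin n → ℤ) : ℝ := ∑ j, u j * w j

lemma pairing_add_smul (u d : Fin n → ℝ) (s : ℝ) (w : Fin n → ℤ) :
    pairing (u + s • d) w = pairing u w + s * pairing d w := by
  simp only [pairing, Pi.add_apply, Pi.smul_apply, smul_eq_mul, mul_sum, ← sum_add_distrib]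
  exact sum_congr rfl fun j _ => by ring

def deg (v : Fin m → Fin n → ℤ) (a : Fin m → ℕ) : Fin n → ℤ := fun j => ∑ i, (a i : ℤ) * v i j

def weight (lam : Fin m → ℝ) (a : Fin m → ℕ) : ℝ := ∑ i, (a i : ℝ) * lam i

def energy (v : Fin m → Fin n → ℤ) (lam : Fin m → ℝ) (a : Fin m → ℕ) (u : Fin n → ℝ) : ℝ :=
  ∑ i, (a i : ℝ) * ell n m v lam i u

def supp (a : Fin m → ℕ) : Finset (Fin m) := {i | a i ≠ 0}

def zmon (a : Fin m → ℕ) : MvPolynomial (Fin m) Lam := ∏ i, X i ^ a i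

def indicator (S : Finset (Fin m)) : Fin m → ℕ := fun i => if i ∈ S then 1 else 0

variable {v : Fin m → Fin n → ℤ} {lam : Fin m → ℝ}

lemma deg_add (a b : Fin m → ℕ) : deg v (a + b) = deg v a + deg v b := by
  ext j
  simp [deg, add_mul, sum_add_distrib]

lemma weight_add (a b : Fin m → ℕ) : weight lam (a + b) = weight lam a + weight lam b := by
  simp [weight, add_mul, sum_add_distrib]

lemma zmon_add (a b : Fin m → ℕ) : zmon (a + b) = zmon a * zmon b := by
  simp [zmon, pow_add, prod_mul_distrib]

lemma indicator_ne_zero_iff {S : Finset (Fin m)} {i : Fin m} : indicator S i ≠ 0 ↔ i ∈ S := by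
  simp [indicator]

lemma sum_indicator_mul {R : Type*} [NonAssocSemiring R] (S : Finset (Fin m)) (f : Fin m → R) :
    ∑ i, (indicator S i : R) * f i = ∑ i ∈ S, f i := by
  simp [indicator, sum_ite_mem]

lemma sum_supp_mul {R : Type*} [NonAssocSemiring R] (k : Fin m → ℕ) (f : Fin m → R) :
    ∑ i ∈ supp k, (k i : R) * f i = ∑ i, (k i : R) * f i :=
  sum_filter_of_ne fun i _ h hi => by simp [hi] at h

lemma zmon_indicator (S : Finset (Fin m)) : zmon (indicator S) = ∏ i ∈ S, X i := by
  simp [zmon, indicator, pow_ite, prod_ite_mem]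

lemma prod_supp_pow (k : Fin m → ℕ) :
    ∏ i ∈ supp k, (X i ^ k i : MvPolynomial (Fin m) Lam) = zmon k :=
  prod_filter_of_ne fun i _ h hi => by simp [hi] at h

lemma energy_eq (a : Fin m → ℕ) (u : Fin n → ℝ) :
    energy v lam a u = pairing u (deg v a) - weight lam a := by
  simp only [energy, ell, pairing, deg, weight, mul_sub, sum_sub_distrib, mul_sum]
  push_cast
  congr 1
  rw [sum_comm]
  exact sum_congr rfl fun j _ => by rw [mul_sum]; exact sum_congr rfl fun i _ => by ring

lemma energy_sub_energy_of_deg_eq {a b : Fin m → ℕ} (h : deg v a = deg v b) (u : Fin n → ℝ) :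
    energy v lam a u - energy v lam b u = weight lam b - weight lam a := by
  rw [energy_eq, energy_eq, h]
  ring

lemma C_TPow_sub_mul (x y z : ℝ) :
    (C (TPow (y - x)) * C (TPow (z - y)) : MvPolynomial (Fin m) Lam) = C (TPow (z - x)) := by
  rw [← map_mul, ← TPow_add, sub_add_sub_cancel']

variable (lam) in
def binom (a b : Fin m → ℕ) : MvPolynomial (Fin m) Lam :=
  zmon a - C (TPow (weight lam b - weight lam a)) * zmon b

lemma binom_self (a : Fin m → ℕ) : binom lam a a = 0 := by
  simp [binom, TPow_zero]

lemma binom_symm (a b : Fin m → ℕ) :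
    binom lam b a = -C (TPow (weight lam a - weight lam b)) * binom lam a b := by
  have h := C_TPow_sub_mul (m := m) (weight lam b) (weight lam a) (weight lam b)
  rw [sub_self, TPow_zero, map_one] at h
  simp only [binom]
  linear_combination -zmon b * h

lemma binom_trans (a b c : Fin m → ℕ) :
    binom lam a c = binom lam a b + C (TPow (weight lam b - weight lam a)) * binom lam b c := by
  simp only [binom]
  rw [← C_TPow_sub_mul (weight lam a) (weight lam b) (weight lam c)]
  ring

lemma binom_add_right (a b c : Fin m → ℕ) :
    binom lam (a + c) (b + c) = zmon c * binom lam a b := by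
  simp only [binom, zmon_add, weight_add, add_sub_add_right_eq_sub]
  ring

variable (v lam) in
def srCon : AddCon (Fin m → ℕ) where
  r a b := binom lam a b ∈ SRideal n m v lam
  iseqv.refl a := by simp [binom_self]
  iseqv.symm {a b} h := by
    rw [binom_symm]
    exact Ideal.mul_mem_left _ _ h
  iseqv.trans {a b c} hab hbc := by
    rw [binom_trans a b c]
    exact add_mem hab (Ideal.mul_mem_left _ _ hbc)
  add' {a b c d} hab hcd := by
    rw [binom_trans (a + c) (b + c) (b + d), binom_add_right, add_comm b c, add_comm b d,
      binom_add_right]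
    exact add_mem (Ideal.mul_mem_left _ _ hab) (Ideal.mul_mem_left _ _ (Ideal.mul_mem_left _ _ hcd))

lemma ell_eq_pairing_sub (i : Fin m) (u : Fin n → ℝ) :
    ell n m v lam i u = pairing u (v i) - lam i := rfl

lemma energy_nonneg {u : Fin n → ℝ} (hu : u ∈ moment n m v lam) (a : Fin m → ℕ) :
    0 ≤ energy v lam a u :=
  sum_nonneg fun i _ => mul_nonneg (Nat.cast_nonneg _) (hu i)

lemma energy_eq_zero_iff {u : Fin n → ℝ} (hu : u ∈ moment n m v lam) (a : Fin m → ℕ) :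
    energy v lam a u = 0 ↔ ∀ i, a i ≠ 0 → ell n m v lam i u = 0 := by
  rw [energy, sum_eq_zero_iff_of_nonneg fun i _ => mul_nonneg (Nat.cast_nonneg _) (hu i)]
  simp [or_iff_not_imp_left]

lemma spansCone_of_mem_moment {S : Finset (Fin m)} {u : Fin n → ℝ} (hu : u ∈ moment n m v lam)
    (h : ∀ i ∈ S, ell n m v lam i u = 0) : SpansCone n m v lam S :=
  ⟨u, Set.mem_iInter₂.2 fun i hi => ⟨hu, h i hi⟩⟩

lemma exists_isPrimitiveCollection_subset {S : Finset (Fin m)} (hS : ¬ SpansCone n m v lam S) :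
    ∃ Pc ⊆ S, IsPrimitiveCollection n m v lam Pc := by
  obtain ⟨Pc, hPcS, hmin⟩ :=
    exists_minimal_le_of_wellFoundedLT (fun T => ¬ SpansCone n m v lam T) S hS
  exact ⟨Pc, hPcS, hmin.prop, fun T hT => by_contra fun hT' => hT.2 (hmin.le_of_le hT' hT.1)⟩

lemma exists_vertex_isMinOn (hDelz : IsDelzant n m v lam) (w : Fin n → ℤ) :
    ∃ u ∈ moment n m v lam, (∀ u' ∈ moment n m v lam, pairing u w ≤ pairing u' w) ∧
      ∃ σ : Fin n → Fin m, Function.Injective σ ∧ {i | ell n m v lam i u = 0} = Set.range σ ∧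
        IsUnit (Matrix.of fun a b : Fin n => v (σ a) b) := by
  obtain ⟨hcompact, ⟨u₀, hu₀⟩, -, hvertex⟩ := hDelz
  let l : (Fin n → ℝ) →L[ℝ] ℝ := ∑ j, (w j : ℝ) • ContinuousLinearMap.proj j
  have hl : ∀ u, l u = pairing u w := fun u => by simp [l, pairing, mul_comm]
  obtain ⟨u, hu, hmin⟩ :=
    hcompact.exists_mem_extremePoints_isMinOn ⟨u₀, interior_subset hu₀⟩ l
  obtain ⟨σ, hσ, hact, hdet⟩ := hvertex u hu
  refine ⟨u, hu.1, fun u' hu' => ?_, σ, hσ, hact, (Matrix.isUnit_iff_isUnit_det _).2 hdet⟩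
  simpa [hl] using hmin hu'

lemma ell_add_smul (i : Fin m) (u d : Fin n → ℝ) (s : ℝ) :
    ell n m v lam i (u + s • d) = ell n m v lam i u + s * pairing d (v i) := by
  rw [ell_eq_pairing_sub, ell_eq_pairing_sub, pairing_add_smul]
  ring

lemma eventually_add_smul_mem_moment {u d : Fin n → ℝ} (hu : u ∈ moment n m v lam)
    (hd : ∀ i, ell n m v lam i u = 0 → 0 ≤ pairing d (v i)) :
    ∀ᶠ s in 𝓝[>] (0 : ℝ), u + s • d ∈ moment n m v lam := by
  simp only [moment, Set.mem_ofPred_eq, eventually_all, ell_add_smul]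
  intro i
  rcases (hu i).eq_or_lt with hzero | hpos
  · filter_upwards [self_mem_nhdsWithin] with s hs
    rw [← hzero, zero_add]
    exact mul_nonneg (le_of_lt hs) (hd i hzero.symm)
  · have hcont : Continuous fun s : ℝ => ell n m v lam i u + s * pairing d (v i) := by fun_prop
    have hlim := tendsto_nhdsWithin_of_tendsto_nhds (s := Set.Ioi 0) (hcont.tendsto 0)
    rw [zero_mul, add_zero] at hlim
    exact (hlim.eventually_const_lt hpos).mono fun s hs => hs.le

lemma pairing_vecMul {k : ℕ} (d : Fin n → ℝ) (x : Fin k → ℤ) (A : Fin k → Fin n → ℤ) :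
    pairing d (x ᵥ* Matrix.of A) = ∑ t, x t * pairing d (A t) := by
  simp only [pairing, Matrix.vecMul, dotProduct, Matrix.of_apply, Int.cast_sum, Int.cast_mul,
    mul_sum]
  rw [sum_comm]
  exact sum_congr rfl fun t _ => sum_congr rfl fun j _ => by ring

lemma deg_eq_vecMul {σ : Fin n → Fin m} (hσ : Function.Injective σ) {a : Fin m → ℕ}
    (ha : ∀ i, a i ≠ 0 → i ∈ Set.range σ) :
    deg v a = (fun t => (a (σ t) : ℤ)) ᵥ* Matrix.of fun a b : Fin n => v (σ a) b := by
  ext j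
  refine (Fintype.sum_of_injective σ hσ _ _ (fun i hi => ?_) fun t => rfl).symm
  simp [not_imp_comm.1 (ha i) hi]

lemma eq_of_deg_eq {σ : Fin n → Fin m} (hσ : Function.Injective σ)
    (hA : IsUnit (Matrix.of fun a b : Fin n => v (σ a) b)) {a b : Fin m → ℕ}
    (ha : ∀ i, a i ≠ 0 → i ∈ Set.range σ) (hb : ∀ i, b i ≠ 0 → i ∈ Set.range σ)
    (h : deg v a = deg v b) : a = b := by
  rw [deg_eq_vecMul hσ ha, deg_eq_vecMul hσ hb] at h
  have hσab := Matrix.vecMul_injective_of_isUnit hA h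
  funext i
  by_cases hi : i ∈ Set.range σ
  · obtain ⟨t, rfl⟩ := hi
    exact_mod_cast congrFun hσab t
  · rw [not_imp_comm.1 (ha i) hi, not_imp_comm.1 (hb i) hi]

lemma exists_pairing_eq_ite {σ : Fin n → Fin m}
    (hA : IsUnit (Matrix.of fun a b : Fin n => v (σ a) b)) (t₀ : Fin n) :
    ∃ d : Fin n → ℝ, ∀ t, pairing d (v (σ t)) = if t = t₀ then 1 else 0 := by
  obtain ⟨d, hd⟩ := Matrix.mulVec_surjective_iff_isUnit.2
    (hA.map (Int.castRingHom ℝ).mapMatrix) (Pi.single t₀ 1)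
  refine ⟨d, fun t => ?_⟩
  rw [← Pi.single_apply, ← hd]
  simp [pairing, Matrix.mulVec, dotProduct, mul_comm]

lemma exists_deg_eq_of_isMinOn {u : Fin n → ℝ} (hu : u ∈ moment n m v lam) {w : Fin n → ℤ}
    (hmin : ∀ u' ∈ moment n m v lam, pairing u w ≤ pairing u' w)
    {σ : Fin n → Fin m} (hσ : Function.Injective σ)
    (hact : {i | ell n m v lam i u = 0} = Set.range σ)
    (hA : IsUnit (Matrix.of fun a b : Fin n => v (σ a) b)) :
    ∃ k : Fin m → ℕ, (∀ i, k i ≠ 0 → ell n m v lam i u = 0) ∧ deg v k = w := by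
  obtain ⟨x, hx : x ᵥ* _ = w⟩ := Matrix.vecMul_surjective_iff_isUnit.2 hA w
  -- If `x t₀ < 0`, moving from `u` along the edge of `P` on which the `ℓ_{σ t}`, `t ≠ t₀`,
  -- vanish decreases `⟨·, w⟩`.
  have hx_nonneg : ∀ t, 0 ≤ x t := by
    intro t₀
    by_contra hneg
    obtain ⟨d, hd⟩ := exists_pairing_eq_ite hA t₀
    have hdw : pairing d w = x t₀ := by
      simp [← hx, pairing_vecMul, hd]
    have hfeas : ∀ i, ell n m v lam i u = 0 → 0 ≤ pairing d (v i) := by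
      intro i hi
      obtain ⟨t, rfl⟩ : i ∈ Set.range σ := hact ▸ hi
      rw [hd]
      split_ifs <;> norm_num
    obtain ⟨s, hs, hs_pos⟩ :=
      ((eventually_add_smul_mem_moment hu hfeas).and self_mem_nhdsWithin).exists
    have hdecrease := hmin _ hs
    rw [pairing_add_smul, hdw] at hdecrease
    have : s * x t₀ < 0 := mul_neg_of_pos_of_neg hs_pos (by exact_mod_cast not_le.1 hneg)
    linarith
  set k := Function.extend σ (fun t => (x t).toNat) 0
  have hk : ∀ i, k i ≠ 0 → i ∈ Set.range σ := fun i hi =>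
    by_contra fun hnot => hi (Function.extend_apply' _ _ _ fun ⟨t, ht⟩ => hnot ⟨t, ht⟩)
  refine ⟨k, fun i hi => (Set.ext_iff.1 hact i).2 (hk i hi), ?_⟩
  rw [deg_eq_vecMul hσ hk, ← hx]
  congr 1
  funext t
  simp [k, hσ.extend_apply, Int.toNat_of_nonneg (hx_nonneg t)]

lemma ell_eq_zero_of_spansCone_of_isMinOn {c : Fin m → ℕ}
    (hc : SpansCone n m v lam (supp c)) {u : Fin n → ℝ} (hu : u ∈ moment n m v lam)
    (hmin : ∀ u' ∈ moment n m v lam, pairing u (deg v c) ≤ pairing u' (deg v c))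
    (i : Fin m) (hi : c i ≠ 0) : ell n m v lam i u = 0 := by
  obtain ⟨u', hu'⟩ := hc
  have hfacet : ∀ i, c i ≠ 0 → u' ∈ facet n m v lam i := fun i hi =>
    Set.mem_iInter₂.1 hu' i (by simpa [supp] using hi)
  have hu'P : u' ∈ moment n m v lam := (hfacet i hi).1
  have hzero' : energy v lam c u' = 0 :=
    (energy_eq_zero_iff hu'P c).2 fun i hi => (hfacet i hi).2
  have hzero : energy v lam c u = 0 := by
    have hle := hmin u' hu'P
    have hnonneg := energy_nonneg hu c
    rw [energy_eq] at hzero' hnonneg ⊢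
    linarith
  exact (energy_eq_zero_iff hu c).1 hzero i hi

lemma eq_of_spansCone_of_deg_eq (hDelz : IsDelzant n m v lam) {a b : Fin m → ℕ}
    (ha : SpansCone n m v lam (supp a)) (hb : SpansCone n m v lam (supp b))
    (h : deg v a = deg v b) : a = b := by
  obtain ⟨u, hu, hmin, σ, hσ, hact, hA⟩ := exists_vertex_isMinOn hDelz (deg v a)
  have hrange : ∀ c : Fin m → ℕ, SpansCone n m v lam (supp c) → deg v c = deg v a →
      ∀ i, c i ≠ 0 → i ∈ Set.range σ := fun c hc hca i hi =>
    hact ▸ ell_eq_zero_of_spansCone_of_isMinOn hc hu (hca ▸ hmin) i hi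
  exact eq_of_deg_eq hσ hA (hrange a ha rfl) (hrange b hb h.symm) h

lemma exists_primitive_relation (hDelz : IsDelzant n m v lam) {Pc : Finset (Fin m)}
    (hPc : IsPrimitiveCollection n m v lam Pc) :
    ∃ k : Fin m → ℕ, SpansCone n m v lam (supp k) ∧ deg v (indicator Pc) = deg v k ∧
      weight lam (indicator Pc) < weight lam k := by
  obtain ⟨u, hu, hmin, σ, hσ, hact, hA⟩ := exists_vertex_isMinOn hDelz (deg v (indicator Pc))
  obtain ⟨k, hk, hdeg⟩ := exists_deg_eq_of_isMinOn hu hmin hσ hact hA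
  refine ⟨k, spansCone_of_mem_moment hu fun i hi => hk i (by simpa [supp] using hi),
    hdeg.symm, ?_⟩
  have hk0 : energy v lam k u = 0 := (energy_eq_zero_iff hu k).2 hk
  have hPc0 : energy v lam (indicator Pc) u ≠ 0 := fun h0 =>
    hPc.1 (spansCone_of_mem_moment hu fun i hi =>
      (energy_eq_zero_iff hu _).1 h0 i (indicator_ne_zero_iff.2 hi))
  have := energy_sub_energy_of_deg_eq (lam := lam) hdeg.symm u
  linarith [(energy_nonneg hu (indicator Pc)).lt_of_ne' hPc0]

lemma srCon_indicator {Pc : Finset (Fin m)} (hPc : IsPrimitiveCollection n m v lam Pc)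
    {k : Fin m → ℕ} (hk : SpansCone n m v lam (supp k)) (hdeg : deg v (indicator Pc) = deg v k) :
    srCon v lam (indicator Pc) k := by
  refine Ideal.subset_span ⟨Pc, supp k, k, hPc, hk, fun i hi => ?_, fun j => ?_, ?_⟩
  · exact Nat.pos_of_ne_zero (by simpa [supp] using hi)
  · simpa [deg, sum_indicator_mul, sum_supp_mul] using congrFun hdeg j
  · simp only [binom, weight, sum_indicator_mul, sum_supp_mul, zmon_indicator, prod_supp_pow]

lemma exists_pos_primitive_gap (hDelz : IsDelzant n m v lam) :
    ∃ ε > 0, ∀ Pc, IsPrimitiveCollection n m v lam Pc → ∃ k : Fin m → ℕ,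
      SpansCone n m v lam (supp k) ∧ deg v (indicator Pc) = deg v k ∧
        weight lam (indicator Pc) + ε ≤ weight lam k := by
  have hrel : ∀ Pc, ∃ k : Fin m → ℕ, IsPrimitiveCollection n m v lam Pc →
      SpansCone n m v lam (supp k) ∧ deg v (indicator Pc) = deg v k ∧
        weight lam (indicator Pc) < weight lam k := fun Pc => by
    by_cases hPc : IsPrimitiveCollection n m v lam Pc
    · exact (exists_primitive_relation hDelz hPc).imp fun _ hk _ => hk
    · exact ⟨0, fun h => absurd h hPc⟩
  choose K hK using hrel
  let gap Pc := if IsPrimitiveCollection n m v lam Pc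
    then weight lam (K Pc) - weight lam (indicator Pc) else 1
  have hgap : ∀ Pc, 0 < gap Pc := fun Pc => by
    by_cases hPc : IsPrimitiveCollection n m v lam Pc
    · simpa [gap, hPc] using (hK Pc hPc).2.2
    · simp [gap, hPc]
  obtain ⟨P₀, hP₀⟩ := Finite.exists_min gap
  refine ⟨gap P₀, hgap P₀, fun Pc hPc => ⟨K Pc, (hK Pc hPc).1, (hK Pc hPc).2.1, ?_⟩⟩
  have := hP₀ Pc
  simp only [gap, if_pos hPc] at this
  linarith

lemma exists_srCon_step (hDelz : IsDelzant n m v lam) :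
    ∃ ε > 0, ∀ a : Fin m → ℕ, ¬ SpansCone n m v lam (supp a) →
      ∃ b, (deg v a = deg v b ∧ srCon v lam a b) ∧ weight lam a + ε ≤ weight lam b := by
  obtain ⟨ε, hε, hgap⟩ := exists_pos_primitive_gap hDelz
  refine ⟨ε, hε, fun a ha => ?_⟩
  obtain ⟨Pc, hPca, hPc⟩ := exists_isPrimitiveCollection_subset ha
  obtain ⟨k, hk, hdeg, hweight⟩ := hgap Pc hPc
  have hle : indicator Pc ≤ a := fun i => by
    by_cases hi : i ∈ Pc
    · simpa [indicator, hi, supp, Nat.one_le_iff_ne_zero] using hPca hi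
    · simp [indicator, hi]
  obtain ⟨a₁, rfl⟩ : ∃ a₁, a = a₁ + indicator Pc :=
    ⟨a - indicator Pc, (tsub_add_cancel_of_le hle).symm⟩
  refine ⟨a₁ + k, ⟨by rw [deg_add, deg_add, hdeg], (srCon v lam).add ((srCon v lam).refl a₁)
    (srCon_indicator hPc hk hdeg)⟩, ?_⟩
  rw [weight_add, weight_add]
  linarith

lemma exists_srCon_spansCone (hDelz : IsDelzant n m v lam) (a : Fin m → ℕ) :
    ∃ b, (deg v a = deg v b ∧ srCon v lam a b) ∧ SpansCone n m v lam (supp b) := by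
  obtain ⟨ε, hε, hstep⟩ := exists_srCon_step hDelz
  obtain ⟨u₀, hu₀⟩ := hDelz.2.1
  refine exists_rel_of_bddAbove_of_step (fun a => ⟨rfl, (srCon v lam).refl a⟩)
    (fun a b c hab hbc => ⟨hab.1.trans hbc.1, (srCon v lam).trans hab.2 hbc.2⟩) hε hstep a
    ⟨pairing u₀ (deg v a), ?_⟩
  rintro _ ⟨b, ⟨hab, -⟩, rfl⟩
  have := energy_nonneg (interior_subset hu₀) b
  rw [energy_eq, ← hab] at this
  linarith

lemma srCon_of_deg_eq (hDelz : IsDelzant n m v lam) {a b : Fin m → ℕ} (h : deg v a = deg v b) :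
    srCon v lam a b := by
  obtain ⟨a', ⟨ha, haa'⟩, ha'⟩ := exists_srCon_spansCone hDelz a
  obtain ⟨b', ⟨hb, hbb'⟩, hb'⟩ := exists_srCon_spansCone hDelz b
  obtain rfl := eq_of_spansCone_of_deg_eq hDelz ha' hb' (ha.symm.trans (h.trans hb))
  exact (srCon v lam).trans haa' ((srCon v lam).symm hbb')

end Toric

theorem relation_mem_SRideal_general
    (n m : ℕ)
    (v : Fin m → Fin n → ℤ) (lam : Fin m → ℝ)
    (hDelz : IsDelzant n m v lam)
    (c : Fin m → ℤ) (hc : ∀ j, (∑ i, c i * v i j) = 0)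
    (a b : Fin m → ℕ)
    (hab : ∀ i, c i = (a i : ℤ) - (b i : ℤ)) :
    ∃ ρ : ℝ,
      (∀ u : Fin n → ℝ,
        ((∑ i, (a i : ℝ) * ell n m v lam i u) - ∑ i, (b i : ℝ) * ell n m v lam i u) = ρ) ∧
      ((∏ i, MvPolynomial.X i ^ a i) -
          MvPolynomial.C (TPow ρ) * ∏ i, MvPolynomial.X i ^ b i) ∈ SRideal n m v lam := by
  have hdeg : Toric.deg v a = Toric.deg v b := funext fun j => by
    simpa [Toric.deg, hab, sub_mul, sub_eq_zero] using hc j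
  exact ⟨Toric.weight lam b - Toric.weight lam a, Toric.energy_sub_energy_of_deg_eq hdeg,
    Toric.srCon_of_deg_eq hDelz hdeg⟩

/-- Lemma 6.7 of Fukaya–Oh–Ohta–Ono, *Lagrangian Floer theory on compact
toric manifolds I*.  Let `c ∈ ℤ^m` with `Σᵢ cᵢ vᵢ = 0` and write `cᵢ = aᵢ - bᵢ` with
`aᵢ, bᵢ ≥ 0`, `aᵢ bᵢ = 0`.  Then `ρ = Σᵢ aᵢ ℓᵢ(u) - Σᵢ bᵢ ℓᵢ(u)` is independent of `u`,
and the element `r = Πᵢ zᵢ^{aᵢ} - T^ρ Πᵢ zᵢ^{bᵢ}` belongs to the quantum Stanley–Reisner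
ideal `SR_ω(X)`. -/
theorem relation_mem_SRideal
    (n m : ℕ) (hn : 1 ≤ n) (hm : 1 ≤ m)
    (v : Fin m → Fin n → ℤ) (lam : Fin m → ℝ)
    (hDelz : IsDelzant n m v lam)
    (c : Fin m → ℤ) (hc : ∀ j, (∑ i, c i * v i j) = 0)
    (a b : Fin m → ℕ)
    (hab : ∀ i, c i = (a i : ℤ) - (b i : ℤ)) (hab0 : ∀ i, a i * b i = 0) :
    ∃ ρ : ℝ,
      (∀ u : Fin n → ℝ,
        ((∑ i, (a i : ℝ) * ell n m v lam i u) - ∑ i, (b i : ℝ) * ell n m v lam i u) = ρ) ∧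
      ((∏ i, MvPolynomial.X i ^ a i) -
          MvPolynomial.C (TPow ρ) * ∏ i, MvPolynomial.X i ^ b i) ∈ SRideal n m v lam :=
  relation_mem_SRideal_general n m v lam hDelz c hc a b hab
end
end

section
/- For every i = 1, …, m the class of z_i in the quotient ring Λ^ℂ[z_1, …, z_m]/SR_ω(X) is invertible. -/
noncomputable section

open scoped Classical Pointwise

variable (F : Type*) [Field F]

variable {F}

/-!
Every `w ∈ ℤⁿ` is a nonnegative integer combination of the normals of a single cone: at a
vertex of `P` minimizing `⟨·, w⟩` the active normals form a `ℤ`-basis, and the coefficients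
of `w` are nonnegative because moving from the vertex along the dual basis stays in `P`.
For `w = -vᵢ` this produces a monomial `zᵢ · ∏ z_{i'}^{k_{i'}}` whose exponent `a` is a
relation `∑ aⱼ vⱼ = 0`. Every such monomial is congruent to a power of `T` modulo
`SR_ω(X)`: the support of `a` spans no cone, so it contains a primitive collection `𝒫`, and
trading `∏_{𝒫} zⱼ` for `T^{ω(𝒫)} ∏_{𝒫'} z^{k}` lowers the energy `∑ aⱼ ℓⱼ(u) ≥ 0` by
`ω(𝒫)`, which compactness of `P` bounds below by a positive constant.
-/

open MvPolynomial Topology Filter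

lemma TPow_zero : TPow 0 = 1 :=
  Subtype.ext HahnSeries.single_zero_one

lemma TPow_add (a b : ℝ) : TPow (a + b) = TPow a * TPow b := by
  apply Subtype.ext
  show HahnSeries.single (a + b) (1 : ℂ) = HahnSeries.single a 1 * HahnSeries.single b 1
  rw [HahnSeries.single_mul_single, one_mul]

lemma isUnit_TPow (c : ℝ) : IsUnit (TPow c) :=
  IsUnit.of_mul_eq_one (TPow (-c)) (by rw [← TPow_add, add_neg_cancel, TPow_zero])

theorem IsCompact.exists_mem_extremePoints_isMaxOn {E : Type*} [AddCommGroup E] [Module ℝ E]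
    [TopologicalSpace E] [T2Space E] [IsTopologicalAddGroup E] [ContinuousSMul ℝ E]
    [LocallyConvexSpace ℝ E] {s : Set E} (hs : IsCompact s) (hne : s.Nonempty)
    (l : E →L[ℝ] ℝ) : ∃ x ∈ s.extremePoints ℝ, IsMaxOn l s x := by
  obtain ⟨z, hz, hmax⟩ := hs.exists_isMaxOn hne l.continuous.continuousOn
  have hexp : IsExposed ℝ s {x ∈ s | ∀ y ∈ s, l y ≤ l x} := fun _ => ⟨l, rfl⟩
  obtain ⟨x, hx⟩ := (hexp.isCompact hs).extremePoints_nonempty ⟨z, hz, fun y hy => hmax hy⟩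
  exact ⟨x, hexp.isExtreme.extremePoints_subset_extremePoints hx, isMaxOn_iff.2 hx.1.2⟩

section Polytope

variable {n m : ℕ} {v : Fin m → Fin n → ℤ} {lam : Fin m → ℝ}

lemma IsDelzant.moment_nonempty (hDelz : IsDelzant n m v lam) :
    (moment n m v lam).Nonempty :=
  hDelz.2.1.mono interior_subset

lemma continuous_ell (i : Fin m) : Continuous (ell n m v lam i) := by
  unfold ell
  fun_prop

lemma ell_add_smul (i : Fin m) (u d : Fin n → ℝ) (t : ℝ) :
    ell n m v lam i (u + t • d) = ell n m v lam i u + t * ∑ j, d j * v i j := by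
  simp only [ell, Pi.add_apply, Pi.smul_apply, smul_eq_mul, add_mul, Finset.sum_add_distrib,
    Finset.mul_sum, mul_assoc]
  ring

lemma sum_mul_ell (Q : Finset (Fin m)) (c : Fin m → ℝ) (u : Fin n → ℝ) :
    ∑ i ∈ Q, c i * ell n m v lam i u
      = ∑ j, u j * ∑ i ∈ Q, c i * v i j - ∑ i ∈ Q, c i * lam i := by
  simp only [ell, mul_sub, Finset.sum_sub_distrib, Finset.mul_sum]
  rw [Finset.sum_comm]
  congr 1
  exact Finset.sum_congr rfl fun _ _ => Finset.sum_congr rfl fun _ _ => by ring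

lemma SpansCone.exists_mem_moment (hne : (moment n m v lam).Nonempty) {S : Finset (Fin m)}
    (hS : SpansCone n m v lam S) :
    ∃ u ∈ moment n m v lam, ∀ i ∈ S, ell n m v lam i u = 0 := by
  rcases S.eq_empty_or_nonempty with rfl | ⟨i₀, hi₀⟩
  · obtain ⟨u, hu⟩ := hne
    exact ⟨u, hu, by simp⟩
  obtain ⟨u, hu⟩ := hS
  have hfacet : ∀ i ∈ S, u ∈ facet n m v lam i := Set.mem_iInter₂.1 hu
  exact ⟨u, (hfacet i₀ hi₀).1, fun i hi => (hfacet i hi).2⟩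

lemma exists_pos_add_smul_mem_moment {u : Fin n → ℝ} (hu : u ∈ moment n m v lam)
    {d : Fin n → ℝ} (hd : ∀ i, ell n m v lam i u = 0 → 0 ≤ ∑ j, d j * v i j) :
    ∃ t : ℝ, 0 < t ∧ u + t • d ∈ moment n m v lam := by
  have hnear : ∀ᶠ t in 𝓝[>] (0 : ℝ), u + t • d ∈ moment n m v lam := by
    simp only [moment, Set.mem_ofPred_eq, Filter.eventually_all]
    intro i
    rcases (hu i).eq_or_lt with hact | hinact
    · filter_upwards [self_mem_nhdsWithin] with t (ht : 0 < t)
      rw [ell_add_smul, ← hact, zero_add]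
      exact mul_nonneg ht.le (hd i hact.symm)
    · have hcont : Continuous fun t : ℝ => ell n m v lam i (u + t • d) :=
        (continuous_ell i).comp (by fun_prop)
      filter_upwards [nhdsWithin_le_nhds ((hcont.tendsto' 0 _ (by simp)).eventually_const_lt
        hinact)] with t ht using ht.le
  obtain ⟨t, hmem, ht⟩ := (hnear.and self_mem_nhdsWithin).exists
  exact ⟨t, ht, hmem⟩

lemma ell_pos_of_mem_interior (hDelz : IsDelzant n m v lam) {u : Fin n → ℝ}
    (hu : u ∈ interior (moment n m v lam)) (i : Fin m) : 0 < ell n m v lam i u := by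
  refine (interior_subset hu i).lt_of_ne' fun h0 => ?_
  -- `ℓᵢ` has a local minimum at `u`, so its linear part `vᵢ` vanishes ...
  have hv : v i = 0 := by
    funext j
    have hmin : IsLocalMin (fun t : ℝ => t * v i j) 0 := by
      have hline : ∀ᶠ t in 𝓝 (0 : ℝ), u + t • Pi.single j 1 ∈ moment n m v lam :=
        (by fun_prop : Continuous fun t : ℝ => u + t • (Pi.single j 1 : Fin n → ℝ))
          |>.continuousAt.preimage_mem_nhds (by simpa using mem_interior_iff_mem_nhds.1 hu)
      filter_upwards [hline] with t ht
      simpa [ell_add_smul, h0, Pi.single_apply] using ht i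
    simpa using hmin.hasDerivAt_eq_zero (hasDerivAt_mul_const _)
  -- ... hence `ℓᵢ ≡ 0`, so `vᵢ = 0` is a row of the unimodular matrix at any vertex.
  obtain ⟨u₀, hu₀⟩ := hDelz.1.extremePoints_nonempty ⟨u, interior_subset hu⟩
  obtain ⟨σ, -, hact, hdet⟩ := hDelz.2.2.2 u₀ hu₀
  obtain ⟨b, rfl⟩ : i ∈ Set.range σ := hact ▸ (show ell n m v lam i u₀ = 0 by
    simpa [ell, hv] using h0)
  have hsingular : (Matrix.of fun a c : Fin n => v (σ a) c).det = 0 :=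
    Matrix.det_eq_zero_of_row_eq_zero b fun j => by simp [hv]
  exact not_isUnit_zero (hsingular ▸ hdet)

lemma exists_pos_le_sum_ell (hDelz : IsDelzant n m v lam) :
    ∃ ε > 0, ∀ S, ¬ SpansCone n m v lam S →
      ∀ u ∈ moment n m v lam, ε ≤ ∑ i ∈ S, ell n m v lam i u := by
  have hfin : ∀ S, ∃ ε > 0, ¬ SpansCone n m v lam S →
      ∀ u ∈ moment n m v lam, ε ≤ ∑ i ∈ S, ell n m v lam i u := by
    intro S
    by_cases hS : SpansCone n m v lam S
    · exact ⟨1, one_pos, fun h => (h hS).elim⟩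
    obtain ⟨u₀, hu₀, hmin⟩ := hDelz.1.exists_isMinOn hDelz.moment_nonempty
      (continuous_finsetSum S fun i _ => continuous_ell i).continuousOn
    have hnonneg : ∀ i ∈ S, 0 ≤ ell n m v lam i u₀ := fun i _ => hu₀ i
    refine ⟨_, (Finset.sum_nonneg hnonneg).lt_of_ne fun hzero => hS ⟨u₀, ?_⟩,
      fun _ u hu => hmin hu⟩
    exact Set.mem_iInter₂.2 fun i hi =>
      ⟨hu₀, (Finset.sum_eq_zero_iff_of_nonneg hnonneg).1 hzero.symm i hi⟩
  choose ε hεpos hε using hfin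
  exact ⟨Finset.univ.inf' Finset.univ_nonempty ε, (Finset.lt_inf'_iff _).2 fun S _ => hεpos S,
    fun S hS u hu => (Finset.inf'_le _ (Finset.mem_univ S)).trans (hε S hS u hu)⟩

lemma exists_isPrimitiveCollection_subset (S : Finset (Fin m))
    (hS : ¬ SpansCone n m v lam S) : ∃ Pc ⊆ S, IsPrimitiveCollection n m v lam Pc := by
  induction S using Finset.strongInduction with
  | H S ih =>
    by_cases h : ∀ T ⊂ S, SpansCone n m v lam T
    · exact ⟨S, subset_rfl, hS, h⟩
    push Not at h
    obtain ⟨T, hTS, hT⟩ := h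
    obtain ⟨Pc, hPcT, hPc⟩ := ih T hTS hT
    exact ⟨Pc, hPcT.trans hTS.subset, hPc⟩

lemma exists_vertex_nonneg_combination (hDelz : IsDelzant n m v lam) (w : Fin n → ℤ) :
    ∃ u ∈ moment n m v lam, ∃ σ : Fin n → Fin m, Function.Injective σ ∧
      (∀ b, ell n m v lam (σ b) u = 0) ∧
      ∃ c : Fin n → ℤ, (∀ b, 0 ≤ c b) ∧ ∀ j, w j = ∑ b, c b * v (σ b) j := by
  let l : (Fin n → ℝ) →L[ℝ] ℝ := -∑ j, (w j : ℝ) • ContinuousLinearMap.proj j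
  have hl : ∀ u, l u = -∑ j, u j * w j := fun u => by simp [l, mul_comm]
  obtain ⟨u, hu, hmax⟩ :=
    hDelz.1.exists_mem_extremePoints_isMaxOn hDelz.moment_nonempty l
  obtain ⟨σ, hσ, hact, hdet⟩ := hDelz.2.2.2 u hu
  have hactσ : ∀ b, ell n m v lam (σ b) u = 0 := fun b =>
    (hact.symm ▸ Set.mem_range_self b : σ b ∈ {i | ell n m v lam i u = 0})
  set A : Matrix (Fin n) (Fin n) ℤ := Matrix.of fun a b => v (σ a) b
  refine ⟨u, hu.1, σ, hσ, hactσ, Matrix.vecMul w A⁻¹, fun a => ?_, fun j => ?_⟩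
  · -- Column `a` of `A⁻¹` is a direction raising `ℓ_{σ a}` and fixing the other active `ℓ`s.
    set d : Fin n → ℝ := fun j => ((A⁻¹ j a : ℤ) : ℝ)
    have hd : ∀ b, ∑ j, d j * v (σ b) j = ((1 : Matrix (Fin n) (Fin n) ℤ) b a : ℝ) := by
      intro b
      rw [← Matrix.mul_nonsing_inv A hdet, Matrix.mul_apply]
      push_cast
      exact Finset.sum_congr rfl fun j _ => mul_comm _ _
    obtain ⟨t, ht, hmem⟩ := exists_pos_add_smul_mem_moment hu.1 (d := d) fun i hi => by
      obtain ⟨b, rfl⟩ : i ∈ Set.range σ := hact ▸ hi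
      rw [hd b, Matrix.one_apply]
      split_ifs <;> norm_num
    have hld : l d = -((Matrix.vecMul w A⁻¹ a : ℤ) : ℝ) := by
      simp [hl, d, Matrix.vecMul, dotProduct, mul_comm]
    have hstep := hmax hmem
    rw [Set.mem_ofPred_eq, map_add, map_smul, smul_eq_mul, hld] at hstep
    have hca : (0 : ℝ) ≤ (Matrix.vecMul w A⁻¹ a : ℤ) :=
      nonneg_of_mul_nonneg_right (by linarith) ht
    exact_mod_cast hca
  · have hinv : Matrix.vecMul (Matrix.vecMul w A⁻¹) A = w := by
      rw [Matrix.vecMul_vecMul, Matrix.nonsing_inv_mul _ hdet, Matrix.vecMul_one]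
    conv_lhs => rw [← hinv]
    simp [Matrix.vecMul, dotProduct, A]

theorem exists_spansCone_eq_sum_mul (hDelz : IsDelzant n m v lam) (w : Fin n → ℤ) :
    ∃ (S : Finset (Fin m)) (k : Fin m → ℕ), SpansCone n m v lam S ∧ (∀ i ∈ S, 0 < k i) ∧
      ∀ j, w j = ∑ i ∈ S, (k i : ℤ) * v i j := by
  obtain ⟨u, hu, σ, hσ, hact, c, hc, hw⟩ := exists_vertex_nonneg_combination hDelz w
  refine ⟨(Finset.univ.filter (0 < c ·)).map ⟨σ, hσ⟩,
    Function.extend σ (fun b => (c b).toNat) 0, ⟨u, Set.mem_iInter₂.2 fun i hi => ?_⟩,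
    fun i hi => ?_, fun j => ?_⟩
  · obtain ⟨b, -, rfl⟩ := Finset.mem_map.1 hi
    exact ⟨hu, hact b⟩
  · obtain ⟨b, hb, rfl⟩ := Finset.mem_map.1 hi
    simpa [hσ.extend_apply] using (Finset.mem_filter.1 hb).2
  · have hpos : ∀ b ∈ Finset.univ, c b * v (σ b) j ≠ 0 → 0 < c b := fun b _ hb =>
      (hc b).lt_of_ne fun h => hb (by rw [← h, zero_mul])
    rw [hw j, Finset.sum_map, ← Finset.sum_filter_of_ne hpos]
    exact Finset.sum_congr rfl fun b _ => by simp [hσ.extend_apply, Int.toNat_of_nonneg (hc b)]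

end Polytope

section Reduction

def IsRelation {n m : ℕ} (v : Fin m → Fin n → ℤ) (a : Fin m → ℕ) : Prop :=
  ∀ j, ∑ i, (a i : ℤ) * v i j = 0

-- The symplectic area `∑ aᵢ ℓᵢ(u)` of a relation `a`; it does not depend on `u`.
def energy {m : ℕ} (lam : Fin m → ℝ) (a : Fin m → ℕ) : ℝ :=
  -∑ i, (a i : ℝ) * lam i

def zMonomial {m : ℕ} (a : Fin m → ℕ) : MvPolynomial (Fin m) Lam :=
  ∏ i, X i ^ a i

variable {n m : ℕ} {v : Fin m → Fin n → ℤ} {lam : Fin m → ℝ}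

lemma sum_cast_add_ite_mul {ι R : Type*} [Fintype ι] [DecidableEq ι] [CommSemiring R]
    (a : ι → ℕ) (Q : Finset ι) (c : ι → ℕ) (g : ι → R) :
    ∑ i, ((a i + if i ∈ Q then c i else 0 : ℕ) : R) * g i
      = ∑ i, (a i : R) * g i + ∑ i ∈ Q, (c i : R) * g i := by
  simp only [Nat.cast_add, Nat.cast_ite, Nat.cast_zero, add_mul, ite_mul, zero_mul,
    Finset.sum_add_distrib, Finset.sum_ite_mem, Finset.univ_inter]

lemma zMonomial_add_ite (a : Fin m → ℕ) (Q : Finset (Fin m)) (c : Fin m → ℕ) :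
    zMonomial (fun i => a i + if i ∈ Q then c i else 0)
      = zMonomial a * ∏ i ∈ Q, X i ^ c i := by
  simp only [zMonomial, pow_add, Finset.prod_mul_distrib, pow_ite, pow_zero, Finset.prod_ite_mem,
    Finset.univ_inter]

lemma sum_mul_ell_eq_energy {a : Fin m → ℕ} (ha : IsRelation v a) (u : Fin n → ℝ) :
    ∑ i, (a i : ℝ) * ell n m v lam i u = energy lam a := by
  have hzero : ∀ j, ∑ i, (a i : ℝ) * v i j = 0 := fun j => by exact_mod_cast ha j
  simp [sum_mul_ell, hzero, energy]

lemma energy_pos (hDelz : IsDelzant n m v lam) {a : Fin m → ℕ} (ha : IsRelation v a)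
    (ha0 : a ≠ 0) : 0 < energy lam a := by
  obtain ⟨u, hu⟩ := hDelz.2.1
  obtain ⟨i, hi⟩ := Function.ne_iff.1 ha0
  have hpos := ell_pos_of_mem_interior hDelz hu
  rw [← sum_mul_ell_eq_energy ha u]
  exact Finset.sum_pos' (fun i _ => mul_nonneg (Nat.cast_nonneg _) (hpos i).le)
    ⟨i, Finset.mem_univ i, mul_pos (Nat.cast_pos.2 (Nat.pos_of_ne_zero hi)) (hpos i)⟩

lemma not_spansCone_support (hDelz : IsDelzant n m v lam) {a : Fin m → ℕ}
    (ha : IsRelation v a) (ha0 : a ≠ 0) :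
    ¬ SpansCone n m v lam (Finset.univ.filter (a · ≠ 0)) := by
  intro hS
  obtain ⟨u, -, hu⟩ := hS.exists_mem_moment hDelz.moment_nonempty
  have hzero : energy lam a = 0 := by
    rw [← sum_mul_ell_eq_energy ha u]
    refine Finset.sum_eq_zero fun i _ => ?_
    by_cases hi : a i = 0
    · simp [hi]
    · rw [hu i (by simpa using hi), mul_zero]
  exact (energy_pos hDelz ha ha0).ne' hzero

lemma sum_mul_lam_sub_sum_lam_eq {Pc Pc' : Finset (Fin m)} {k : Fin m → ℕ}
    (hrel : ∀ j, ∑ i ∈ Pc, v i j = ∑ i ∈ Pc', (k i : ℤ) * v i j) (u : Fin n → ℝ) :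
    ∑ i ∈ Pc', (k i : ℝ) * lam i - ∑ i ∈ Pc, lam i
      = ∑ i ∈ Pc, ell n m v lam i u - ∑ i ∈ Pc', (k i : ℝ) * ell n m v lam i u := by
  have h1 := sum_mul_ell (v := v) (lam := lam) Pc 1 u
  have h2 := sum_mul_ell (v := v) (lam := lam) Pc' (fun i => k i) u
  have h3 : ∀ j, ∑ i ∈ Pc, (v i j : ℝ) = ∑ i ∈ Pc', (k i : ℝ) * v i j := fun j => by
    exact_mod_cast hrel j
  simp only [Pi.one_apply, one_mul] at h1
  simp only [h1, h2, h3]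
  ring

lemma exists_reduction_step (hDelz : IsDelzant n m v lam) {ε : ℝ}
    (hε : ∀ S, ¬ SpansCone n m v lam S →
      ∀ u ∈ moment n m v lam, ε ≤ ∑ i ∈ S, ell n m v lam i u)
    {a : Fin m → ℕ} (ha : IsRelation v a) (ha0 : a ≠ 0) :
    ∃ b c, IsRelation v b ∧ energy lam b ≤ energy lam a - ε ∧
      zMonomial a - C (TPow c) * zMonomial b ∈ SRideal n m v lam := by
  obtain ⟨Pc, hPcsupp, hPc⟩ :=
    exists_isPrimitiveCollection_subset _ (not_spansCone_support hDelz ha ha0)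
  obtain ⟨Pc', k, hPc', hk, hrel⟩ :=
    exists_spansCone_eq_sum_mul hDelz fun j => ∑ i ∈ Pc, v i j
  obtain ⟨a', rfl⟩ : ∃ a' : Fin m → ℕ, a = fun i => a' i + if i ∈ Pc then 1 else 0 := by
    refine ⟨fun i => a i - if i ∈ Pc then 1 else 0, funext fun i => ?_⟩
    by_cases hi : i ∈ Pc
    · have := (Finset.mem_filter.1 (hPcsupp hi)).2
      simp only [hi, if_true]
      omega
    · simp [hi]
  have hω : ε ≤ ∑ i ∈ Pc', (k i : ℝ) * lam i - ∑ i ∈ Pc, lam i := by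
    obtain ⟨u, hu, hu0⟩ := hPc'.exists_mem_moment hDelz.moment_nonempty
    have hzero : ∑ i ∈ Pc', (k i : ℝ) * ell n m v lam i u = 0 :=
      Finset.sum_eq_zero fun i hi => by rw [hu0 i hi, mul_zero]
    rw [sum_mul_lam_sub_sum_lam_eq hrel u, hzero, sub_zero]
    exact hε Pc hPc.1 u hu
  refine ⟨fun i => a' i + if i ∈ Pc' then k i else 0,
    ∑ i ∈ Pc', (k i : ℝ) * lam i - ∑ i ∈ Pc, lam i, fun j => ?_, ?_, ?_⟩
  · have hj := ha j
    rw [sum_cast_add_ite_mul] at hj ⊢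
    simp only [Nat.cast_one, one_mul, hrel j] at hj
    linarith
  · simp only [energy, sum_cast_add_ite_mul, Nat.cast_one, one_mul]
    linarith
  · rw [zMonomial_add_ite, zMonomial_add_ite, ← mul_left_comm, ← mul_sub]
    refine Ideal.mul_mem_left _ _ (Ideal.subset_span ⟨Pc, Pc', k, hPc, hPc', hk, hrel, ?_⟩)
    simp only [pow_one]

theorem exists_zMonomial_sub_C_TPow_mem_SRideal (hDelz : IsDelzant n m v lam)
    {a : Fin m → ℕ} (ha : IsRelation v a) :
    ∃ c, zMonomial a - C (TPow c) ∈ SRideal n m v lam := by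
  obtain ⟨ε, hεpos, hε⟩ := exists_pos_le_sum_ell hDelz
  have hbase : ∃ c, zMonomial (0 : Fin m → ℕ) - C (TPow c) ∈ SRideal n m v lam :=
    ⟨0, by simp [zMonomial, TPow_zero]⟩
  obtain ⟨N, hN⟩ := exists_nat_ge (energy lam a / ε)
  rw [div_le_iff₀ hεpos] at hN
  induction N generalizing a with
  | zero =>
    obtain rfl | ha0 := eq_or_ne a 0
    · exact hbase
    exact absurd hN (by simpa using energy_pos hDelz ha ha0)
  | succ N ih =>
    obtain rfl | ha0 := eq_or_ne a 0
    · exact hbase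
    obtain ⟨b, c, hb, hEb, hmem⟩ := exists_reduction_step hDelz hε ha ha0
    obtain ⟨c', hc'⟩ := ih hb (by push_cast at hN; linarith)
    refine ⟨c + c', ?_⟩
    have hsplit : zMonomial a - C (TPow (c + c'))
        = (zMonomial a - C (TPow c) * zMonomial b)
          + C (TPow c) * (zMonomial b - C (TPow c')) := by
      rw [TPow_add, map_mul]
      ring
    rw [hsplit]
    exact Ideal.add_mem _ hmem (Ideal.mul_mem_left _ _ hc')

end Reduction

theorem X_isUnit_in_quotient_by_SR_general
    (n m : ℕ)
    (v : Fin m → Fin n → ℤ) (lam : Fin m → ℝ)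
    (hDelz : IsDelzant n m v lam) (i : Fin m) :
    IsUnit (Ideal.Quotient.mk (SRideal n m v lam) (MvPolynomial.X i)) := by
  obtain ⟨S, k, -, -, hk⟩ := exists_spansCone_eq_sum_mul hDelz (-v i)
  have hrel : IsRelation v
      fun i' => (Pi.single i 1 : Fin m → ℕ) i' + if i' ∈ S then k i' else 0 := by
    intro j
    rw [sum_cast_add_ite_mul, ← hk j]
    simp [Pi.single_apply]
  obtain ⟨c, hc⟩ := exists_zMonomial_sub_C_TPow_mem_SRideal hDelz hrel
  have hXi : zMonomial (Pi.single i 1 : Fin m → ℕ) = X i := by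
    simp [zMonomial, Pi.single_apply]
  rw [zMonomial_add_ite, hXi] at hc
  have hquot := Ideal.Quotient.eq.2 hc
  rw [map_mul] at hquot
  exact isUnit_of_mul_isUnit_left (hquot ▸ (isUnit_TPow c).map
    ((Ideal.Quotient.mk (SRideal n m v lam)).comp C))

/-- Corollary 6.8 of Fukaya–Oh–Ohta–Ono, *Lagrangian Floer theory on
compact toric manifolds I*.  For every `i`, the class of `zᵢ` in the quotient ring
`Λ^ℂ[z₁, …, z_m]/SR_ω(X)` is invertible. -/
theorem X_isUnit_in_quotient_by_SR
    (n m : ℕ) (hn : 1 ≤ n) (hm : 1 ≤ m)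
    (v : Fin m → Fin n → ℤ) (lam : Fin m → ℝ)
    (hDelz : IsDelzant n m v lam) (i : Fin m) :
    IsUnit (Ideal.Quotient.mk (SRideal n m v lam) (MvPolynomial.X i)) :=
  X_isUnit_in_quotient_by_SR_general n m v lam hDelz i
end
end

section
/- Let 𝒫 ⊆ {1, …, m} be a primitive collection, let 𝒫' ⊆ {1, …, m} be a subset spanning a cone of the normal fan, and let k_{i'} (i' ∈ 𝒫') be positive integers such that Σ_{i∈𝒫} v_i = Σ_{i'∈𝒫'} k_{i'} v_{i'}. Then the function u ↦ Σ_{i∈𝒫} ℓ_i(u) − Σ_{i'∈𝒫'} k_{i'} ℓ_{i'}(u) is constant on ℝ^n, and its value ω(𝒫) is strictly positive. -/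
/-!
The linear parts of the `ℓᵢ` cancel by the relation `Σ_{𝒫} vᵢ = Σ_{𝒫'} k_{i'} v_{i'}`, so the
function is the constant `Σ_{𝒫'} k_{i'} λ_{i'} − Σ_{𝒫} λᵢ`. Evaluate it at a point `w ∈ P` lying
on every facet `∂_{i'}P`, `i' ∈ 𝒫'`: it equals `Σ_{i∈𝒫} ℓᵢ(w) ≥ 0`, and equality would put `w`
on every facet `∂ᵢP`, `i ∈ 𝒫`, which a primitive collection forbids.
-/

noncomputable section

namespace ToricPotential

/-- The affine functions `ℓᵢ(u) = ⟨u, vᵢ⟩ - λᵢ` attached to a moment polytope. -/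
def ell (n m : ℕ) (v : Fin m → Fin n → ℤ) (lam : Fin m → ℝ) (i : Fin m) (u : Fin n → ℝ) : ℝ :=
  (∑ j, u j * (v i j : ℝ)) - lam i

/-- The polytope `P = {u | ℓᵢ(u) ≥ 0 for all i}`. -/
def moment (n m : ℕ) (v : Fin m → Fin n → ℤ) (lam : Fin m → ℝ) : Set (Fin n → ℝ) :=
  {u | ∀ i, 0 ≤ ell n m v lam i u}


/-- The facet `∂ᵢP = {u ∈ P | ℓᵢ(u) = 0}`. -/
def facet (n m : ℕ) (v : Fin m → Fin n → ℤ) (lam : Fin m → ℝ) (i : Fin m) :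
    Set (Fin n → ℝ) :=
  {u ∈ moment n m v lam | ell n m v lam i u = 0}

/-- A subset `S ⊆ {1, …, m}` spans a cone of the normal fan iff `⋂_{i ∈ S} ∂ᵢP ≠ ∅`. -/
def SpansCone (n m : ℕ) (v : Fin m → Fin n → ℤ) (lam : Fin m → ℝ)
    (Sc : Finset (Fin m)) : Prop :=
  (⋂ i ∈ Sc, facet n m v lam i).Nonempty

/-- A primitive collection: a subset which does not span a cone of the normal fan while
every proper subset does. -/
def IsPrimitiveCollection (n m : ℕ) (v : Fin m → Fin n → ℤ) (lam : Fin m → ℝ)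
    (Pc : Finset (Fin m)) : Prop :=
  ¬ SpansCone n m v lam Pc ∧ ∀ Sc ⊂ Pc, SpansCone n m v lam Sc

/-- `P` is a (compact) Delzant polytope: every facet has dimension `n - 1`, and at every
vertex exactly `n` facets meet, whose normal vectors form a `ℤ`-basis of `ℤⁿ`. -/
def IsDelzant (n m : ℕ) (v : Fin m → Fin n → ℤ) (lam : Fin m → ℝ) : Prop :=
  IsCompact (moment n m v lam) ∧ (interior (moment n m v lam)).Nonempty ∧
  (∀ i, Module.finrank ℝ (affineSpan ℝ (facet n m v lam i)).direction = n - 1) ∧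
  ∀ u ∈ Set.extremePoints ℝ (moment n m v lam),
    ∃ σ : Fin n → Fin m, Function.Injective σ ∧
      {i | ell n m v lam i u = 0} = Set.range σ ∧
      IsUnit (Matrix.det (Matrix.of fun a b : Fin n => v (σ a) b))

variable {n m : ℕ} {v : Fin m → Fin n → ℤ} {lam : Fin m → ℝ}

theorem sum_ell_sub_sum_natCast_mul_ell_eq {s t : Finset (Fin m)} {k : Fin m → ℕ}
    (hvec : ∀ j, (∑ i ∈ s, v i j) = ∑ i ∈ t, (k i : ℤ) * v i j) (u : Fin n → ℝ) :
    (∑ i ∈ s, ell n m v lam i u) - ∑ i ∈ t, (k i : ℝ) * ell n m v lam i u =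
      (∑ i ∈ t, (k i : ℝ) * lam i) - ∑ i ∈ s, lam i := by
  have hlin : (∑ i ∈ s, ∑ j, u j * (v i j : ℝ)) =
      ∑ i ∈ t, (k i : ℝ) * ∑ j, u j * (v i j : ℝ) := by
    simp only [Finset.mul_sum, mul_left_comm (k _ : ℝ)]
    rw [Finset.sum_comm, Finset.sum_comm (s := t)]
    refine Finset.sum_congr rfl fun j _ => ?_
    rw [← Finset.mul_sum, ← Finset.mul_sum]
    exact_mod_cast congrArg (fun z : ℤ => u j * z) (hvec j)
  simp only [ell, mul_sub, Finset.sum_sub_distrib]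
  rw [hlin]
  ring

theorem SpansCone.exists_mem_moment_forall_ell_eq_zero {S : Finset (Fin m)}
    (hS : SpansCone n m v lam S) (hP : (moment n m v lam).Nonempty) :
    ∃ w ∈ moment n m v lam, ∀ i ∈ S, ell n m v lam i w = 0 := by
  obtain ⟨w, hw⟩ := hS
  simp only [Set.mem_iInter] at hw
  -- for `S = ∅` the intersection is all of `ℝⁿ`, so `w` need not lie in `P`
  rcases S.eq_empty_or_nonempty with rfl | ⟨i₀, hi₀⟩
  · obtain ⟨w', hw'⟩ := hP
    exact ⟨w', hw', by simp⟩
  · exact ⟨w, (hw i₀ hi₀).1, fun i hi => (hw i hi).2⟩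

theorem sum_ell_pos_of_not_spansCone {S : Finset (Fin m)} (hS : ¬ SpansCone n m v lam S)
    {w : Fin n → ℝ} (hw : w ∈ moment n m v lam) :
    0 < ∑ i ∈ S, ell n m v lam i w := by
  have hnonneg : ∀ i ∈ S, 0 ≤ ell n m v lam i w := fun i _ => hw i
  refine (Finset.sum_nonneg hnonneg).lt_of_ne fun hzero => hS ⟨w, ?_⟩
  simp only [Set.mem_iInter]
  exact fun i hi => ⟨hw, (Finset.sum_eq_zero_iff_of_nonneg hnonneg).mp hzero.symm i hi⟩

theorem omega_primitive_collection_pos_general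
    (n m : ℕ)
    (v : Fin m → Fin n → ℤ) (lam : Fin m → ℝ)
    (hDelz : IsDelzant n m v lam)
    (Pc Pc' : Finset (Fin m)) (k : Fin m → ℕ)
    (hPc : IsPrimitiveCollection n m v lam Pc)
    (hPc' : SpansCone n m v lam Pc')
    (hvec : ∀ j, (∑ i ∈ Pc, v i j) = ∑ i ∈ Pc', (k i : ℤ) * v i j) :
    (∀ u u' : Fin n → ℝ,
      ((∑ i ∈ Pc, ell n m v lam i u) - ∑ i ∈ Pc', (k i : ℝ) * ell n m v lam i u) =
      ((∑ i ∈ Pc, ell n m v lam i u') - ∑ i ∈ Pc', (k i : ℝ) * ell n m v lam i u')) ∧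
    ∀ u : Fin n → ℝ,
      0 < (∑ i ∈ Pc, ell n m v lam i u) - ∑ i ∈ Pc', (k i : ℝ) * ell n m v lam i u := by
  have hconst := sum_ell_sub_sum_natCast_mul_ell_eq (lam := lam) hvec
  refine ⟨fun u u' => by rw [hconst u, hconst u'], fun u => ?_⟩
  have hP : (moment n m v lam).Nonempty := hDelz.2.1.mono interior_subset
  obtain ⟨w, hwP, hw⟩ := hPc'.exists_mem_moment_forall_ell_eq_zero hP
  have hzero : ∑ i ∈ Pc', (k i : ℝ) * ell n m v lam i w = 0 :=
    Finset.sum_eq_zero fun i hi => by rw [hw i hi, mul_zero]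
  rw [hconst u, ← hconst w, hzero, sub_zero]
  exact sum_ell_pos_of_not_spansCone hPc.1 hwP

/-- **Statement 13** (Lemma 6.6 of Fukaya–Oh–Ohta–Ono, *Lagrangian Floer theory on compact
toric manifolds I*).  Let `𝒫` be a primitive collection, `𝒫'` a subset spanning a cone of
the normal fan and `k_{i'} > 0` integers with `Σ_{i∈𝒫} vᵢ = Σ_{i'∈𝒫'} k_{i'} v_{i'}`.
Then `u ↦ Σ_{i∈𝒫} ℓᵢ(u) − Σ_{i'∈𝒫'} k_{i'} ℓ_{i'}(u)` is constant on `ℝⁿ` and its value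
`ω(𝒫)` is strictly positive. -/
theorem omega_primitive_collection_pos
    (n m : ℕ) (hn : 1 ≤ n) (hm : 1 ≤ m)
    (v : Fin m → Fin n → ℤ) (lam : Fin m → ℝ)
    (hDelz : IsDelzant n m v lam)
    (Pc Pc' : Finset (Fin m)) (k : Fin m → ℕ)
    (hPc : IsPrimitiveCollection n m v lam Pc)
    (hPc' : SpansCone n m v lam Pc')
    (hk : ∀ i ∈ Pc', 0 < k i)
    (hvec : ∀ j, (∑ i ∈ Pc, v i j) = ∑ i ∈ Pc', (k i : ℤ) * v i j) :
    (∀ u u' : Fin n → ℝ,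
      ((∑ i ∈ Pc, ell n m v lam i u) - ∑ i ∈ Pc', (k i : ℝ) * ell n m v lam i u) =
      ((∑ i ∈ Pc, ell n m v lam i u') - ∑ i ∈ Pc', (k i : ℝ) * ell n m v lam i u')) ∧
    ∀ u : Fin n → ℝ,
      0 < (∑ i ∈ Pc, ell n m v lam i u) - ∑ i ∈ Pc', (k i : ℝ) * ell n m v lam i u :=
  omega_primitive_collection_pos_general n m v lam hDelz Pc Pc' k hPc hPc' hvec

end ToricPotential
end
end

section
/- Let u_0 ∈ Int P. Then there exist sequences λ_i^h ∈ ℚ (i = 1, …, m) and u_0^h ∈ ℚ^n such that, setting P^h = {u ∈ ℝ^n : ⟨u, v_i⟩ − λ_i^h ≥ 0 for all i}: (1) λ_i^h → λ_i and u_0^h → u_0 as h → ∞; (2) u_0^h ∈ Int P^h; and (3) for every l, the set I_l and the space A_l^⊥ computed for (P^h, u_0^h) coincide with those computed for (P, u_0); in particular the leading term equation at u_0^h for P^h is the same system of equations as the leading term equation at u_0 for P. -/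
/-! Round `u₀` and the values `ℓᵢ(u₀)` down to the grid `ℤ / k` and choose `λᵢ^h` so that
`ℓᵢ^h(u₀^h)` equals the rounded value of `ℓᵢ(u₀)`; as the `vᵢ` are integral, `λᵢ^h` is rational.
Rounding is monotone, and once `1 / k` is below every gap between the finitely many values
`ℓᵢ(u₀)` and `0` it is also strictly monotone on them. Hence it preserves their order and the
positivity of `ℓᵢ(u₀)`, which is what interiority asks for when `vᵢ ≠ 0`. -/

noncomputable section

open Filter Topology Matrix

lemma lt_dotProduct_of_mem_interior {ι : Type*} [Fintype ι] {w u : ι → ℝ} {c : ℝ}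
    (hw : w ≠ 0) (hu : u ∈ interior {x | c ≤ x ⬝ᵥ w}) : c < u ⬝ᵥ w := by
  have hray : Tendsto (fun s : ℝ => u - s • w) (𝓝[>] 0) (𝓝 u) := by
    have hcont : Continuous (fun s : ℝ => u - s • w) := by fun_prop
    simpa using (hcont.tendsto 0).mono_left nhdsWithin_le_nhds
  obtain ⟨s, hs, hs_pos⟩ :=
    ((hray.eventually (mem_interior_iff_mem_nhds.1 hu)).and self_mem_nhdsWithin).exists
  have hww : 0 < w ⬝ᵥ w := by simpa using dotProduct_self_star_pos_iff.2 hw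
  have hs' : c ≤ u ⬝ᵥ w - s * (w ⬝ᵥ w) := by simpa [sub_dotProduct] using hs
  nlinarith [mul_pos hs_pos hww]

def floorApprox (k : ℕ) (x : ℝ) : ℚ := ⌊x * k⌋ / k

lemma cast_floorApprox (k : ℕ) (x : ℝ) : (floorApprox k x : ℝ) = ⌊x * k⌋ / k := by
  simp [floorApprox]

lemma floorApprox_mono (k : ℕ) : Monotone (floorApprox k) := fun x y hxy => by
  unfold floorApprox
  gcongr

@[simp]
lemma floorApprox_zero (k : ℕ) : floorApprox k 0 = 0 := by
  simp [floorApprox]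

lemma tendsto_floorApprox (x : ℝ) :
    Tendsto (fun k => (floorApprox k x : ℝ)) atTop (𝓝 x) := by
  have hlower : Tendsto (fun k : ℕ => x - 1 / (k : ℝ)) atTop (𝓝 x) := by
    simpa using tendsto_const_nhds.sub (tendsto_one_div_atTop_nhds_zero_nat (𝕜 := ℝ))
  refine tendsto_of_tendsto_of_tendsto_of_le_of_le' hlower tendsto_const_nhds ?_ ?_
  all_goals
    filter_upwards [eventually_gt_atTop 0] with k hk
    have hk' : (0 : ℝ) < k := by exact_mod_cast hk
    rw [cast_floorApprox]
  · rw [le_div_iff₀ hk', sub_mul, one_div_mul_cancel hk'.ne']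
    linarith [Int.lt_floor_add_one (x * k)]
  · rw [div_le_iff₀ hk']
    exact Int.floor_le _

lemma eventually_floorApprox_lt {x y : ℝ} (hxy : x < y) :
    ∀ᶠ k in atTop, floorApprox k x < floorApprox k y := by
  filter_upwards [(tendsto_floorApprox x).eventually_lt (tendsto_floorApprox y) hxy]
    with k hk
  exact_mod_cast hk

lemma eventually_le_iff_floorApprox_le {ι : Type*} [Finite ι] (t : ι → ℝ) :
    ∀ᶠ k in atTop, ∀ i j, t i ≤ t j ↔ floorApprox k (t i) ≤ floorApprox k (t j) := by
  refine eventually_all.2 fun i => eventually_all.2 fun j => ?_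
  by_cases hij : t i ≤ t j
  · exact Eventually.of_forall fun k => iff_of_true hij (floorApprox_mono k hij)
  · filter_upwards [eventually_floorApprox_lt (not_le.1 hij)] with k hk
    exact iff_of_false hij hk.not_ge

namespace ToricPotential

variable {n m : ℕ} {v : Fin m → Fin n → ℤ} {lam : Fin m → ℝ}

lemma ell_eq_dotProduct (i : Fin m) (u : Fin n → ℝ) :
    ell n m v lam i u = u ⬝ᵥ (fun j => (v i j : ℝ)) - lam i := rfl

lemma continuous_ell (i : Fin m) : Continuous (ell n m v lam i) := by
  unfold ell; fun_prop

lemma ell_eq_ell_of_eq_zero {i : Fin m} (hv : v i = 0) (u u' : Fin n → ℝ) :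
    ell n m v lam i u = ell n m v lam i u' := by
  simp [ell, hv]

lemma pos_ell_of_mem_interior {u : Fin n → ℝ} (hu : u ∈ interior (moment n m v lam))
    {i : Fin m} (hv : v i ≠ 0) : 0 < ell n m v lam i u := by
  have hw : (fun j => (v i j : ℝ)) ≠ 0 := fun h =>
    hv (funext fun j => by simpa using congrFun h j)
  have hsub : moment n m v lam ⊆ {x | lam i ≤ x ⬝ᵥ fun j => (v i j : ℝ)} := fun x hx => by
    simpa [ell_eq_dotProduct] using hx i
  simpa [ell_eq_dotProduct] using lt_dotProduct_of_mem_interior hw (interior_mono hsub hu)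

/-- A condition with `vᵢ = 0` does not depend on `u`, so it need not be strict. -/
theorem mem_interior_moment_iff {u : Fin n → ℝ} :
    u ∈ interior (moment n m v lam) ↔
      ∀ i, 0 ≤ ell n m v lam i u ∧ (v i ≠ 0 → 0 < ell n m v lam i u) := by
  refine ⟨fun hu i => ⟨interior_subset hu i, pos_ell_of_mem_interior hu⟩, fun h => ?_⟩
  refine mem_interior_iff_mem_nhds.2 (eventually_all.2 fun i => ?_)
  by_cases hv : v i = 0
  · exact Eventually.of_forall fun x => (ell_eq_ell_of_eq_zero hv x u).symm ▸ (h i).1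
  · exact (((continuous_ell i).tendsto u).eventually_const_lt ((h i).2 hv)).mono
      fun _ => le_of_lt

theorem exists_rational_approximation_with_same_leading_term_data_general
    (n m : ℕ)
    (v : Fin m → Fin n → ℤ) (lam : Fin m → ℝ)
    (u₀ : Fin n → ℝ) (hu₀ : u₀ ∈ interior (moment n m v lam)) :
    ∃ (lamh : ℕ → Fin m → ℝ) (u₀h : ℕ → Fin n → ℝ),
      -- (2) rationality
      (∀ h i, ∃ q : ℚ, lamh h i = (q : ℝ)) ∧
      (∀ h j, ∃ q : ℚ, u₀h h j = (q : ℝ)) ∧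
      -- (1) convergence
      (∀ i, Filter.Tendsto (fun h => lamh h i) Filter.atTop (nhds (lam i))) ∧
      (∀ j, Filter.Tendsto (fun h => u₀h h j) Filter.atTop (nhds (u₀ j))) ∧
      -- (2) interiority
      (∀ h, u₀h h ∈ interior (moment n m v (lamh h))) ∧
      -- (3) the level-set structure (hence `I_l`, `A_l^⊥` and the leading term
      --     equation) is unchanged
      (∀ h i i', ell n m v lam i u₀ ≤ ell n m v lam i' u₀ ↔
        ell n m v (lamh h) i (u₀h h) ≤ ell n m v (lamh h) i' (u₀h h)) := by
  set t : Fin m → ℝ := fun i => ell n m v lam i u₀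
  have ht := mem_interior_moment_iff.1 hu₀
  obtain ⟨N, hN⟩ := eventually_atTop.1 <| (eventually_le_iff_floorApprox_le t).and <|
    eventually_all.2 fun i => eventually_imp_distrib_left.2 fun hv => by
      simpa using eventually_floorApprox_lt ((ht i).2 hv)
  let uh : ℕ → Fin n → ℚ := fun h j => floorApprox (h + N) (u₀ j)
  let lamh : ℕ → Fin m → ℚ := fun h i => ∑ j, uh h j * v i j - floorApprox (h + N) (t i)
  have hell : ∀ h i, ell n m v (fun i => (lamh h i : ℝ)) i (fun j => (uh h j : ℝ)) =
      floorApprox (h + N) (t i) := by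
    intro h i
    simp [ell, lamh]
  have hlim : ∀ x, Tendsto (fun h => (floorApprox (h + N) x : ℝ)) atTop (𝓝 x) :=
    fun x => (tendsto_floorApprox x).comp (tendsto_add_atTop_nat N)
  refine ⟨fun h i => lamh h i, fun h j => uh h j, fun h i => ⟨_, rfl⟩, fun h j => ⟨_, rfl⟩,
    fun i => ?_, fun j => hlim (u₀ j), fun h => ?_, fun h i i' => ?_⟩
  · have hlam : lam i = ∑ j, u₀ j * v i j - t i := by simp [t, ell]
    rw [hlam]
    push_cast [lamh]
    exact (tendsto_finsetSum _ fun j _ => (hlim (u₀ j)).mul_const _).sub (hlim (t i))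
  · refine mem_interior_moment_iff.2 fun i => ?_
    rw [hell]
    exact ⟨by simpa using floorApprox_mono (h + N) (ht i).1,
      fun hv => by exact_mod_cast (hN _ le_add_self).2 i hv⟩
  · rw [hell, hell, Rat.cast_le]
    exact (hN _ le_add_self).1 i i'

/-- **Statement 18** (Proposition 10.8 of Fukaya–Oh–Ohta–Ono, *Lagrangian Floer theory on
compact toric manifolds I*).  Given `u₀ ∈ Int P`, there are rational data
`λᵢ^h → λᵢ`, `u₀^h → u₀` with `u₀^h` interior to the perturbed polytope `P^h`, such that
for all `h` the ordered level-set structure of the values `ℓᵢ` at the base point is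
unchanged:  `ℓᵢ(u₀) ≤ ℓᵢ'(u₀) ↔ ℓᵢ^h(u₀^h) ≤ ℓᵢ'^h(u₀^h)` for all `i, i'`.  In
particular each set `I_l` and each space `A_l^⊥`, hence the leading term equation,
computed for `(P^h, u₀^h)` coincides with the one computed for `(P, u₀)`. -/
theorem exists_rational_approximation_with_same_leading_term_data
    (n m : ℕ) (hn : 1 ≤ n) (hm : 1 ≤ m)
    (v : Fin m → Fin n → ℤ) (lam : Fin m → ℝ)
    (hPcomp : IsCompact (moment n m v lam))
    (hPint : (interior (moment n m v lam)).Nonempty)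
    (u₀ : Fin n → ℝ) (hu₀ : u₀ ∈ interior (moment n m v lam)) :
    ∃ (lamh : ℕ → Fin m → ℝ) (u₀h : ℕ → Fin n → ℝ),
      -- (2) rationality
      (∀ h i, ∃ q : ℚ, lamh h i = (q : ℝ)) ∧
      (∀ h j, ∃ q : ℚ, u₀h h j = (q : ℝ)) ∧
      -- (1) convergence
      (∀ i, Filter.Tendsto (fun h => lamh h i) Filter.atTop (nhds (lam i))) ∧
      (∀ j, Filter.Tendsto (fun h => u₀h h j) Filter.atTop (nhds (u₀ j))) ∧
      -- (2) interiority
      (∀ h, u₀h h ∈ interior (moment n m v (lamh h))) ∧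
      -- (3) the level-set structure (hence `I_l`, `A_l^⊥` and the leading term
      --     equation) is unchanged
      (∀ h i i', ell n m v lam i u₀ ≤ ell n m v lam i' u₀ ↔
        ell n m v (lamh h) i (u₀h h) ≤ ell n m v (lamh h) i' (u₀h h)) :=
  exists_rational_approximation_with_same_leading_term_data_general n m v lam u₀ hu₀

end ToricPotential
end
end
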